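/- arXiv:2106.04091 — 9 statements merged into one kernel-verified Lean document; each statement's English description precedes it below -/
import Mathlib

section
/- Let A be a finite set of k positive integers and let H be a finite set of r positive integers with maximum element h_r. Then |HA| ≥ h_r(k−1) + r. -/
open Finset Pointwise

/-- `itSum h A` is the sumset `hA`: integers expressible as a sum of `h` elements
of `A` (repetitions allowed); `0A = {0}`. -/
def itSum : ℕ → Finset ℤ → Finset ℤ
  | 0, _ => {0}
  | n + 1, A => A + itSum n A

/-- `sumsetH H A = ⋃ h ∈ H, hA`. -/
def sumsetH (H : Finset ℕ) (A : Finset ℤ) : Finset ℤ :=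
  H.biUnion fun h => itSum h A

/-- `rSum h A` is the restricted sumset `h^A`: integers expressible as a sum of `h`
pairwise distinct elements of `A`; `0^A = {0}`. -/
def rSum (h : ℕ) (A : Finset ℤ) : Finset ℤ :=
  (A.powersetCard h).image fun B => B.sum id

/-- `rSumH H A = ⋃ h ∈ H, h^A`. -/
def rSumH (H : Finset ℕ) (A : Finset ℤ) : Finset ℤ :=
  H.biUnion fun h => rSum h A

/-! Iterating Cauchy–Davenport over `ℤ` gives `|h_r A| ≥ h_r (k - 1) + 1`. With `m = min A > 0`,
the `r - 1` integers `h m` for `h ∈ H`, `h < h_r`, lie in `HA` and are smaller than every element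
of `h_r A`, since the latter are at least `h_r m`. -/

theorem itSum_succ (n : ℕ) (A : Finset ℤ) : itSum (n + 1) A = A + itSum n A := rfl

theorem itSum_nonempty {A : Finset ℤ} (hA : A.Nonempty) (h : ℕ) : (itSum h A).Nonempty := by
  induction h with
  | zero => exact singleton_nonempty 0
  | succ n ih => exact hA.add ih

theorem le_card_itSum {A : Finset ℤ} (hA : A.Nonempty) (h : ℕ) :
    h * (#A - 1) + 1 ≤ #(itSum h A) := by
  induction h with
  | zero => simp [itSum]
  | succ n ih =>
    have h_cd := cauchy_davenport_add_of_linearOrder_isCancelAdd hA (itSum_nonempty hA n)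
    have hA_pos := hA.card_pos
    rw [itSum_succ, Nat.succ_mul]
    omega

theorem mul_mem_itSum {A : Finset ℤ} {a : ℤ} (ha : a ∈ A) (h : ℕ) : (h : ℤ) * a ∈ itSum h A := by
  induction h with
  | zero => simp [itSum]
  | succ n ih => exact mem_add.2 ⟨a, ha, _, ih, by push_cast; ring⟩

theorem mul_le_of_mem_itSum {A : Finset ℤ} {m : ℤ} (hm : ∀ a ∈ A, m ≤ a) {h : ℕ} {x : ℤ}
    (hx : x ∈ itSum h A) : (h : ℤ) * m ≤ x := by
  induction h generalizing x with
  | zero => simp_all [itSum]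
  | succ n ih =>
    obtain ⟨a, ha, y, hy, rfl⟩ := mem_add.1 hx
    have := hm a ha
    have := ih hy
    push_cast
    linarith

theorem itSum_subset_sumsetH {H : Finset ℕ} {h : ℕ} (hh : h ∈ H) (A : Finset ℤ) :
    itSum h A ⊆ sumsetH H A :=
  subset_biUnion_of_mem (fun h => itSum h A) hh

theorem image_mul_subset_sumsetH (H : Finset ℕ) {A : Finset ℤ} {a : ℤ} (ha : a ∈ A) :
    H.image (fun h : ℕ => (h : ℤ) * a) ⊆ sumsetH H A := by
  intro x hx
  obtain ⟨h, hh, rfl⟩ := mem_image.1 hx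
  exact itSum_subset_sumsetH hh A (mul_mem_itSum ha h)

theorem sumset_card_lower_bound_general (k r hr : ℕ) (A : Finset ℤ) (H : Finset ℕ)
    (hAne : A.Nonempty) (hHne : H.Nonempty)
    (hApos : ∀ a ∈ A, 0 < a)
    (hk : A.card = k) (hrcard : H.card = r)
    (hmax : H.max' hHne = hr) :
    hr * (k - 1) + r ≤ (sumsetH H A).card := by
  subst hk hrcard hmax
  set m := A.min' hAne
  set hr := H.max' hHne
  have hm_pos : 0 < m := hApos m (A.min'_mem hAne)
  have hm_min : ∀ a ∈ A, m ≤ a := fun a ha => A.min'_le a ha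
  set S := (H.erase hr).image fun h : ℕ => (h : ℤ) * m
  have hS_card : #S = #H - 1 :=
    (card_image_of_injective _ ((mul_left_injective₀ hm_pos.ne').comp Nat.cast_injective)).trans
      (card_erase_of_mem (H.max'_mem hHne))
  have h_disj : Disjoint S (itSum hr A) := by
    refine disjoint_left.2 fun x hxS hxT => ?_
    obtain ⟨h, hh, rfl⟩ := mem_image.1 hxS
    have h_lt : (h : ℤ) < hr := by
      exact_mod_cast (H.le_max' h (mem_of_mem_erase hh)).lt_of_ne (ne_of_mem_erase hh)
    have := mul_le_of_mem_itSum hm_min hxT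
    nlinarith
  have h_sub : S ∪ itSum hr A ⊆ sumsetH H A :=
    union_subset ((image_subset_image (erase_subset _ _)).trans
      (image_mul_subset_sumsetH H (A.min'_mem hAne))) (itSum_subset_sumsetH (H.max'_mem hHne) A)
  calc hr * (#A - 1) + #H ≤ #S + #(itSum hr A) := by
        have := le_card_itSum hAne hr
        have := hHne.card_pos
        omega
    _ = #(S ∪ itSum hr A) := (card_union_of_disjoint h_disj).symm
    _ ≤ #(sumsetH H A) := card_le_card h_sub

theorem sumset_card_lower_bound (k r hr : ℕ) (A : Finset ℤ) (H : Finset ℕ)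
    (hAne : A.Nonempty) (hHne : H.Nonempty)
    (hApos : ∀ a ∈ A, 0 < a) (hHpos : ∀ h ∈ H, 0 < h)
    (hk : A.card = k) (hrcard : H.card = r)
    (hmax : H.max' hHne = hr) :
    hr * (k - 1) + r ≤ (sumsetH H A).card :=
  sumset_card_lower_bound_general k r hr A H hAne hHne hApos hk hrcard hmax
end

section
/- Let A be a set of k positive integers and let H = {h_1, h_2, …, h_r} be a set of positive integers with h_1 < h_2 < ⋯ < h_r ≤ k, and set h_0 = 0. Then |H^A| ≥ Σ_{i=1}^{r} (h_i − h_{i−1})(k − h_i) + r. -/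
open Finset Pointwise

/-- `C` is an upward-closed subset of `A`. -/
def UpClosed (A C : Finset ℤ) : Prop :=
  C ⊆ A ∧ ∀ c ∈ C, ∀ a ∈ A, c ≤ a → a ∈ C

lemma mem_rSum {x : ℤ} {h : ℕ} {A : Finset ℤ} :
    x ∈ rSum h A ↔ ∃ B, B ⊆ A ∧ B.card = h ∧ B.sum id = x := by
  simp only [rSum, mem_image, mem_powersetCard]
  constructor
  · rintro ⟨B, ⟨h1, h2⟩, h3⟩; exact ⟨B, h1, h2, h3⟩
  · rintro ⟨B, h1, h2, h3⟩; exact ⟨B, ⟨h1, h2⟩, h3⟩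

lemma rSum_mono {h : ℕ} {A A' : Finset ℤ} (hAA : A' ⊆ A) : rSum h A' ⊆ rSum h A := by
  intro x hx
  rw [mem_rSum] at hx ⊢
  obtain ⟨B, h1, h2, h3⟩ := hx
  exact ⟨B, h1.trans hAA, h2, h3⟩

/-- Existence of an upward-closed subset of any size `m ≤ |A|`. -/
lemma exists_upClosed : ∀ (m : ℕ) (A : Finset ℤ), m ≤ A.card →
    ∃ C, C.card = m ∧ UpClosed A C := by
  intro m
  induction m with
  | zero =>
    intro A _
    exact ⟨∅, card_empty, empty_subset A, by simp⟩
  | succ m ih =>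
    intro A hm
    have hA : A.Nonempty := by
      rw [← Finset.card_pos]; omega
    set a := A.max' hA with ha
    have haA : a ∈ A := A.max'_mem hA
    have hcard : m ≤ (A.erase a).card := by
      rw [Finset.card_erase_of_mem haA]; omega
    obtain ⟨C', hC'card, hC'sub, hC'up⟩ := ih (A.erase a) hcard
    have haC' : a ∉ C' := fun hc => (Finset.mem_erase.mp (hC'sub hc)).1 rfl
    refine ⟨insert a C', ?_, ?_, ?_⟩
    · rw [Finset.card_insert_of_notMem haC', hC'card]
    · intro x hx
      rcases Finset.mem_insert.mp hx with rfl | hx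
      · exact haA
      · exact (Finset.mem_erase.mp (hC'sub hx)).2
    · intro c hc x hxA hcx
      rcases Finset.mem_insert.mp hc with hceq | hc
      · have hxa : x = a := le_antisymm (A.le_max' x hxA) (hceq ▸ hcx)
        exact Finset.mem_insert.mpr (Or.inl hxa)
      · by_cases hxa : x = a
        · simp [hxa]
        · exact Finset.mem_insert_of_mem
            (hC'up c hc x (Finset.mem_erase.mpr ⟨hxa, hxA⟩) hcx)

/-- A subset of `A` of the same size as an upward-closed subset has a sum at most
the sum of the upward-closed subset. -/
lemma sum_le_upClosed : ∀ (m : ℕ) (A B C : Finset ℤ), B ⊆ A → UpClosed A C →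
    B.card = m → C.card = m → B.sum id ≤ C.sum id := by
  intro m
  induction m with
  | zero =>
    intro A B C _ _ hB hC
    rw [Finset.card_eq_zero] at hB hC
    subst hB; subst hC; simp
  | succ m ih =>
    intro A B C hBA hC hBcard hCcard
    have hBne : B.Nonempty := by rw [← Finset.card_pos]; omega
    have hAne : A.Nonempty := hBne.mono hBA
    set a := A.max' hAne with ha
    have haA : a ∈ A := A.max'_mem hAne
    have hCne : C.Nonempty := by rw [← Finset.card_pos]; omega
    have haC : a ∈ C := by
      obtain ⟨c0, hc0⟩ := hCne
      exact hC.2 c0 hc0 a haA (A.le_max' c0 (hC.1 hc0))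
    set b := B.max' hBne with hb
    have hbB : b ∈ B := B.max'_mem hBne
    have hba : b ≤ a := A.le_max' b (hBA hbB)
    have hBsub : B.erase b ⊆ A.erase a := by
      intro x hx
      obtain ⟨hxb, hxB⟩ := Finset.mem_erase.mp hx
      refine Finset.mem_erase.mpr ⟨?_, hBA hxB⟩
      intro heq
      have h1 : x ≤ b := B.le_max' x hxB
      exact hxb (by omega)
    have hCup : UpClosed (A.erase a) (C.erase a) := by
      constructor
      · intro x hx
        obtain ⟨hxa, hxC⟩ := Finset.mem_erase.mp hx
        exact Finset.mem_erase.mpr ⟨hxa, hC.1 hxC⟩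
      · intro c hc x hx hcx
        obtain ⟨hca, hcC⟩ := Finset.mem_erase.mp hc
        obtain ⟨hxa, hxA⟩ := Finset.mem_erase.mp hx
        exact Finset.mem_erase.mpr ⟨hxa, hC.2 c hcC x hxA hcx⟩
    have h1 : (B.erase b).card = m := by rw [Finset.card_erase_of_mem hbB, hBcard]; omega
    have h2 : (C.erase a).card = m := by rw [Finset.card_erase_of_mem haC, hCcard]; omega
    have := ih (A.erase a) (B.erase b) (C.erase a) hBsub hCup h1 h2
    have hB' : (B.erase b).sum id + b = B.sum id := Finset.sum_erase_add B id hbB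
    have hC' : (C.erase a).sum id + a = C.sum id := Finset.sum_erase_add C id haC
    omega

/-- Key single-set lower bound: `|h^A| ≥ h (|A| - h) + 1`. -/
lemma rSum_card_lower : ∀ (n : ℕ) (A : Finset ℤ) (h : ℕ), A.card = h + n →
    h * n + 1 ≤ (rSum h A).card := by
  intro n
  induction n with
  | zero =>
    intro A h hcard
    have : A.sum id ∈ rSum h A := mem_rSum.mpr ⟨A, Finset.Subset.refl A, by omega, rfl⟩
    have := Finset.card_pos.mpr ⟨_, this⟩
    omega
  | succ n ih =>
    intro A h hcard
    rcases Nat.eq_zero_or_pos h with rfl | hpos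
    · have : (0:ℤ) ∈ rSum 0 A := mem_rSum.mpr ⟨∅, empty_subset A, rfl, rfl⟩
      have := Finset.card_pos.mpr ⟨_, this⟩
      omega
    · have hAne : A.Nonempty := by rw [← Finset.card_pos]; omega
      set a := A.max' hAne with ha
      have haA : a ∈ A := A.max'_mem hAne
      have hA'card : (A.erase a).card = h + n := by
        rw [Finset.card_erase_of_mem haA]; omega
      have IH := ih (A.erase a) h hA'card
      obtain ⟨T, hTcard, hTup⟩ := exists_upClosed (h + 1) A (by omega)
      have haT : a ∈ T := by
        have hTne : T.Nonempty := by rw [← Finset.card_pos]; omega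
        obtain ⟨c0, hc0⟩ := hTne
        exact hTup.2 c0 hc0 a haA (A.le_max' c0 (hTup.1 hc0))
      -- new sums
      set N : Finset ℤ := (T.erase a).image (fun c => T.sum id - c) with hN
      have hNcard : N.card = h := by
        rw [hN, Finset.card_image_of_injective _ (fun x y hxy => by omega),
          Finset.card_erase_of_mem haT, hTcard]
        omega
      have hNsub : N ⊆ rSum h A := by
        intro x hx
        obtain ⟨c, hc, rfl⟩ := Finset.mem_image.mp hx
        refine mem_rSum.mpr ⟨T.erase c, ?_, ?_, ?_⟩
        · exact (Finset.erase_subset c T).trans hTup.1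
        · rw [Finset.card_erase_of_mem (Finset.mem_of_mem_erase hc), hTcard]; omega
        · exact Finset.sum_erase_eq_sub (Finset.mem_of_mem_erase hc)
      have hold : rSum h (A.erase a) ⊆ rSum h A := rSum_mono (Finset.erase_subset a A)
      -- every element of N is greater than every element of rSum h (A.erase a)
      have hgt : ∀ x ∈ rSum h (A.erase a), ∀ y ∈ N, x < y := by
        intro x hx y hy
        obtain ⟨B, hBsub, hBcard, hBsum⟩ := mem_rSum.mp hx
        obtain ⟨c, hc, rfl⟩ := Finset.mem_image.mp hy
        obtain ⟨hca, hcT⟩ := Finset.mem_erase.mp hc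
        have hTup' : UpClosed (A.erase a) (T.erase a) := by
          constructor
          · intro z hz
            obtain ⟨hza, hzT⟩ := Finset.mem_erase.mp hz
            exact Finset.mem_erase.mpr ⟨hza, hTup.1 hzT⟩
          · intro z hz w hw hzw
            obtain ⟨hza, hzT⟩ := Finset.mem_erase.mp hz
            obtain ⟨hwa, hwA⟩ := Finset.mem_erase.mp hw
            exact Finset.mem_erase.mpr ⟨hwa, hTup.2 z hzT w hwA hzw⟩
        have hle : B.sum id ≤ (T.erase a).sum id :=
          sum_le_upClosed h (A.erase a) B (T.erase a) hBsub hTup' hBcard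
            (by rw [Finset.card_erase_of_mem haT, hTcard]; omega)
        have hTs : (T.erase a).sum id = T.sum id - a := Finset.sum_erase_eq_sub haT
        have hlt : c < a := lt_of_le_of_ne (A.le_max' c (hTup.1 hcT)) hca
        omega
      have hdisj : Disjoint (rSum h (A.erase a)) N := by
        rw [Finset.disjoint_left]
        intro x hx hxN
        exact absurd rfl (ne_of_lt (hgt x hx x hxN))
      have hsub : rSum h (A.erase a) ∪ N ⊆ rSum h A := Finset.union_subset hold hNsub
      have := Finset.card_le_card hsub
      rw [Finset.card_union_of_disjoint hdisj] at this
      have : h * n + 1 + h ≤ (rSum h A).card := by omega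
      have heq : h * (n + 1) + 1 = h * n + 1 + h := by ring
      omega

lemma h_mono_le {r : ℕ} {h : ℕ → ℕ} (hmono : ∀ i, i < r → h i < h (i + 1)) :
    ∀ i j, i ≤ j → j ≤ r → h i ≤ h j := by
  intro i j
  induction j with
  | zero =>
    intro hij _
    have : i = 0 := by omega
    rw [this]
  | succ j ihj =>
    intro hij hjr
    by_cases hieq : i = j + 1
    · rw [hieq]
    · have h1 : h i ≤ h j := ihj (by omega) (by omega)
      have h2 := hmono j (by omega)
      omega

lemma main_aux : ∀ (r : ℕ) (k : ℕ) (A : Finset ℤ) (h : ℕ → ℕ),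
    (∀ a ∈ A, 0 < a) → A.card = k → h 0 = 0 →
    (∀ i, i < r → h i < h (i + 1)) → h r ≤ k →
    (∑ i ∈ Finset.Icc 1 r, (h i - h (i - 1)) * (k - h i)) + r
      ≤ (rSumH ((Finset.Icc 1 r).image h) A).card := by
  intro r
  induction r with
  | zero =>
    intro k A h _ _ _ _ _
    simp
  | succ r ih =>
    intro k A h hApos hk h0 hmono hle
    have hmono' : ∀ i, i < r → h i < h (i + 1) := fun i hi => hmono i (by omega)
    have hrr1 : h r < h (r + 1) := hmono r (by omega)
    have IH := ih k A h hApos hk h0 hmono' (by omega)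
    -- the top h r elements of A
    obtain ⟨T, hTcard, hTup⟩ := exists_upClosed (h r) A (by omega)
    set A' : Finset ℤ := A \ T with hA'
    have hA'card : A'.card = k - h r := by
      rw [hA', Finset.card_sdiff_of_subset hTup.1, hk, hTcard]
    set h' : ℕ := h (r + 1) - h r with hh'
    have hB := rSum_card_lower (k - h (r + 1)) A' h' (by omega)
    -- new sums
    set N : Finset ℤ := (rSum h' A').image (fun x => T.sum id + x) with hNdef
    have hNcard : N.card = (rSum h' A').card :=
      Finset.card_image_of_injective _ (fun x y hxy => by omega)
    have hNsub : N ⊆ rSum (h (r + 1)) A := by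
      intro x hx
      obtain ⟨s, hs, rfl⟩ := Finset.mem_image.mp hx
      obtain ⟨B, hBsub, hBcard, hBsum⟩ := mem_rSum.mp hs
      have hdisjBT : Disjoint T B := by
        rw [Finset.disjoint_right]
        intro z hz
        exact (Finset.mem_sdiff.mp (hBsub hz)).2
      refine mem_rSum.mpr ⟨T ∪ B, ?_, ?_, ?_⟩
      · exact Finset.union_subset hTup.1 (hBsub.trans (Finset.sdiff_subset))
      · rw [Finset.card_union_of_disjoint hdisjBT, hTcard, hBcard]; omega
      · rw [Finset.sum_union hdisjBT, hBsum]
    -- old elements are at most T.sum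
    have hold_le : ∀ x ∈ rSumH ((Finset.Icc 1 r).image h) A, x ≤ T.sum id := by
      intro x hx
      obtain ⟨g, hg, hxg⟩ := Finset.mem_biUnion.mp hx
      obtain ⟨i, hi, rfl⟩ := Finset.mem_image.mp hg
      obtain ⟨hi1, hir⟩ := Finset.mem_Icc.mp hi
      have hghr : h i ≤ h r := h_mono_le hmono' i r hir (le_refl r)
      obtain ⟨B, hBsub, hBcard, hBsum⟩ := mem_rSum.mp hxg
      obtain ⟨B', hBB', hB'sub, hB'card⟩ :=
        Finset.exists_subsuperset_card_eq (n := h r) hBsub (by omega) (by omega)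
      have h1 : B.sum id ≤ B'.sum id :=
        Finset.sum_le_sum_of_subset_of_nonneg hBB'
          (fun z hz _ => le_of_lt (hApos z (hB'sub hz)))
      have h2 : B'.sum id ≤ T.sum id :=
        sum_le_upClosed (h r) A B' T hB'sub hTup hB'card hTcard
      omega
    -- new elements are greater than T.sum
    have hnew_gt : ∀ y ∈ N, T.sum id < y := by
      intro y hy
      obtain ⟨s, hs, rfl⟩ := Finset.mem_image.mp hy
      obtain ⟨B, hBsub, hBcard, hBsum⟩ := mem_rSum.mp hs
      have hBne : B.Nonempty := by rw [← Finset.card_pos]; omega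
      have hspos : 0 < B.sum id :=
        Finset.sum_pos (fun z hz => hApos z (Finset.mem_sdiff.mp (hBsub hz)).1) hBne
      omega
    have hdisj : Disjoint (rSumH ((Finset.Icc 1 r).image h) A) N := by
      rw [Finset.disjoint_left]
      intro x hx hxN
      have := hold_le x hx
      have := hnew_gt x hxN
      omega
    -- assemble
    have hIcc : Finset.Icc 1 (r + 1) = insert (r + 1) (Finset.Icc 1 r) := by
      ext x; simp only [Finset.mem_Icc, Finset.mem_insert]; omega
    have hr1mem : (r + 1) ∉ Finset.Icc 1 r := by simp
    have hHins : (Finset.Icc 1 (r + 1)).image h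
        = insert (h (r + 1)) ((Finset.Icc 1 r).image h) := by
      rw [hIcc, Finset.image_insert]
    have hbig : rSumH ((Finset.Icc 1 r).image h) A ∪ N
        ⊆ rSumH ((Finset.Icc 1 (r + 1)).image h) A := by
      apply Finset.union_subset
      · intro x hx
        obtain ⟨g, hg, hxg⟩ := Finset.mem_biUnion.mp hx
        refine Finset.mem_biUnion.mpr ⟨g, ?_, hxg⟩
        rw [hHins]
        exact Finset.mem_insert_of_mem hg
      · intro x hx
        refine Finset.mem_biUnion.mpr ⟨h (r + 1), ?_, hNsub hx⟩
        rw [hHins]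
        exact Finset.mem_insert_self _ _
    have hcard := Finset.card_le_card hbig
    rw [Finset.card_union_of_disjoint hdisj] at hcard
    have hsum : (∑ i ∈ Finset.Icc 1 (r + 1), (h i - h (i - 1)) * (k - h i))
        = (∑ i ∈ Finset.Icc 1 r, (h i - h (i - 1)) * (k - h i))
          + (h (r + 1) - h r) * (k - h (r + 1)) := by
      rw [hIcc, Finset.sum_insert hr1mem]
      simp only [Nat.add_sub_cancel]
      ring
    rw [hh'] at hB hNcard
    have hNb : (h (r + 1) - h r) * (k - h (r + 1)) + 1 ≤ N.card := by omega
    omega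

theorem restricted_sumset_card_lower_bound (k r : ℕ) (A : Finset ℤ)
    (hApos : ∀ a ∈ A, 0 < a) (hk : A.card = k)
    (h : ℕ → ℕ) (h0 : h 0 = 0)
    (hmono : ∀ i, i < r → h i < h (i + 1)) (hle : h r ≤ k)
    (H : Finset ℕ) (hH : H = (Finset.Icc 1 r).image h) :
    (∑ i ∈ Finset.Icc 1 r, (h i - h (i - 1)) * (k - h i)) + r
      ≤ (rSumH H A).card := by
  subst hH
  exact main_aux r k A h hApos hk h0 hmono hle
end

section
/- For positive integers r ≤ k, if A = {1, 2, …, k} and H = {1, 2, …, r}, then |H^A| = rk − r(r−1)/2; in particular the lower bound |H^A| ≥ Σ_{i=1}^{r}(h_i − h_{i−1})(k − h_i) + r is attained. -/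
open Finset Pointwise

lemma sum_bounds (h : ℕ) : ∀ (K : ℤ) (B : Finset ℤ), B ⊆ Finset.Icc 1 K → B.card = h →
    (h : ℤ) * (h + 1) ≤ 2 * B.sum id ∧ 2 * B.sum id ≤ 2 * h * K - h * (h - 1) := by
  induction h with
  | zero =>
    intro K B hB hc
    rw [Finset.card_eq_zero] at hc
    subst hc
    simp
  | succ n ih =>
    intro K B hB hc
    have hne : B.Nonempty := Finset.card_pos.mp (by omega)
    set m := B.max' hne with hm
    have hmB : m ∈ B := B.max'_mem hne
    have hm1 : 1 ≤ m := (Finset.mem_Icc.mp (hB hmB)).1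
    have hmK : m ≤ K := (Finset.mem_Icc.mp (hB hmB)).2
    have hsub : B.erase m ⊆ Finset.Icc 1 (m - 1) := by
      intro x hx
      have hxB := Finset.mem_of_mem_erase hx
      have hx1 := (Finset.mem_Icc.mp (hB hxB)).1
      have hxm := B.le_max' x hxB
      have hne' := Finset.ne_of_mem_erase hx
      rw [Finset.mem_Icc]; omega
    have hcard : (B.erase m).card = n := by
      rw [Finset.card_erase_of_mem hmB, hc]; omega
    obtain ⟨h1, h2⟩ := ih (m - 1) (B.erase m) hsub hcard
    have hsum : B.sum id = m + (B.erase m).sum id := by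
      rw [← Finset.add_sum_erase _ _ hmB]; rfl
    have hBm : B ⊆ Finset.Icc 1 m := by
      intro x hx
      rw [Finset.mem_Icc]
      exact ⟨(Finset.mem_Icc.mp (hB hx)).1, B.le_max' x hx⟩
    have hcard2 : B.card ≤ (Finset.Icc (1:ℤ) m).card := Finset.card_le_card hBm
    rw [Int.card_Icc] at hcard2
    have hmn : (n : ℤ) + 1 ≤ m := by omega
    rw [hsum]
    constructor
    · push_cast
      nlinarith [h1, hmn]
    · push_cast
      nlinarith [h2, mul_nonneg (by positivity : (0:ℤ) ≤ 2 + 2*(n:ℤ)) (sub_nonneg.mpr hmK)]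

lemma exists_subset (h : ℕ) : ∀ K s : ℤ, (h : ℤ) ≤ K → (h : ℤ) * (h + 1) ≤ 2 * s →
    2 * s ≤ 2 * h * K - h * (h - 1) →
    ∃ B : Finset ℤ, B ⊆ Finset.Icc 1 K ∧ B.card = h ∧ B.sum id = s := by
  induction h with
  | zero =>
    intro K s _ h1 h2
    push_cast at h1 h2
    have hs : s = 0 := by linarith
    exact ⟨∅, by simp, by simp, by simp [hs]⟩
  | succ n ih =>
    intro K s hK h1 h2
    push_cast at hK h1 h2
    obtain ⟨c, hc⟩ := Int.even_mul_succ_self (n : ℤ)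
    set m := min K (s - c) with hm
    have hmK : m ≤ K := min_le_left _ _
    have hms : m ≤ s - c := min_le_right _ _
    have hmn : (n : ℤ) + 1 ≤ m := by
      apply le_min hK
      nlinarith
    have hcases := min_cases K (s - c)
    obtain ⟨B', hB'sub, hB'card, hB'sum⟩ :=
      ih (m - 1) (s - m) (by linarith) (by nlinarith) (by
        rcases hcases with ⟨he, hle⟩ | ⟨he, hle⟩
        · rw [← hm] at he
          rw [he]
          nlinarith
        · rw [← hm] at he
          rw [he]
          nlinarith [mul_nonneg (by positivity : (0:ℤ) ≤ (n:ℤ)) (by linarith : (0:ℤ) ≤ m - ((n:ℤ)+1))])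
    have hmem : m ∉ B' := by
      intro hmem
      have := Finset.mem_Icc.mp (hB'sub hmem)
      omega
    refine ⟨insert m B', ?_, ?_, ?_⟩
    · rw [Finset.insert_subset_iff]
      refine ⟨Finset.mem_Icc.mpr ⟨by omega, hmK⟩, hB'sub.trans (Finset.Icc_subset_Icc_right (by omega))⟩
    · rw [Finset.card_insert_of_notMem hmem, hB'card]
    · rw [Finset.sum_insert hmem, hB'sum]
      simp

lemma find_h : ∀ r k : ℕ, 1 ≤ r → r ≤ k → ∀ s : ℤ, 1 ≤ s →
    2 * s ≤ 2 * r * k - r * ((r : ℤ) - 1) →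
    ∃ h : ℕ, 1 ≤ h ∧ h ≤ r ∧ (h : ℤ) * ((h : ℤ) + 1) ≤ 2 * s ∧
      2 * s ≤ 2 * h * k - h * ((h : ℤ) - 1) := by
  intro r
  induction r with
  | zero => omega
  | succ n ih =>
    intro k hn1 hk s hs hupper
    rcases Nat.eq_zero_or_pos n with h0 | hnpos
    · subst h0
      refine ⟨1, le_refl _, le_refl _, by push_cast; linarith, ?_⟩
      push_cast at hupper ⊢
      linarith
    · by_cases hcase : 2 * s ≤ 2 * (n : ℤ) * k - n * ((n : ℤ) - 1)
      · obtain ⟨h, hh1, hh2, hh3, hh4⟩ := ih k hnpos (by omega) s hs hcase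
        exact ⟨h, hh1, by omega, hh3, hh4⟩
      · refine ⟨n + 1, by omega, le_refl _, ?_, ?_⟩
        · rw [not_le] at hcase
          obtain ⟨c, hc⟩ := Int.even_mul_succ_self ((n : ℤ) - 1)
          have hc' : (n : ℤ) * ((n : ℤ) - 1) = 2 * c := by linear_combination hc
          have hlt : (n : ℤ) * k - c < s := by
            nlinarith [hcase]
          have hge : (n : ℤ) * k - c + 1 ≤ s := Int.lt_iff_add_one_le.mp hlt
          have hkn : ((n : ℤ)) + 1 ≤ (k : ℤ) := by exact_mod_cast Nat.cast_le.mpr (by omega : n + 1 ≤ k)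
          push_cast
          nlinarith [mul_nonneg (by positivity : (0:ℤ) ≤ (n:ℤ)) (by linarith : (0:ℤ) ≤ (k:ℤ) - ((n:ℤ)+1))]
        · exact hupper

theorem restricted_sumset_card_lower_bound_optimal (k r : ℕ) (hr : 0 < r) (hrk : r ≤ k) :
    (rSumH (Finset.Icc 1 r) (Finset.Icc (1 : ℤ) (k : ℤ))).card
      = r * k - r * (r - 1) / 2 := by
  obtain ⟨c, hc⟩ : ∃ c : ℕ, r * (r - 1) = c + c := by
    have hev := Nat.even_mul_succ_self (r - 1)
    have hr1 : r - 1 + 1 = r := by omega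
    rw [hr1] at hev
    obtain ⟨c, hcc⟩ := hev
    exact ⟨c, by rw [mul_comm]; exact hcc⟩
  have hcle : c ≤ r * k := by
    have : r * (r - 1) ≤ r * k := Nat.mul_le_mul_left r (by omega)
    omega
  have hdiv : r * (r - 1) / 2 = c := by omega
  rw [hdiv]
  have hzc : ((r : ℤ)) * ((r : ℤ) - 1) = 2 * c := by
    have h' := hc
    zify [show 1 ≤ r from hr] at h'
    linarith
  have hM : ((r * k - c : ℕ) : ℤ) = (r : ℤ) * k - c := by
    rw [Nat.cast_sub hcle]
    push_cast
    ring
  have hrk' : (r : ℤ) ≤ (k : ℤ) := by exact_mod_cast hrk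
  have key : rSumH (Finset.Icc 1 r) (Finset.Icc (1 : ℤ) (k : ℤ))
      = Finset.Icc (1 : ℤ) ((r * k - c : ℕ) : ℤ) := by
    ext x
    simp only [rSumH, rSum, Finset.mem_biUnion, Finset.mem_image, Finset.mem_powersetCard,
      Finset.mem_Icc]
    constructor
    · rintro ⟨h, ⟨hh1, hh2⟩, B, ⟨hBsub, hBcard⟩, hBsum⟩
      obtain ⟨hlo, hhi⟩ := sum_bounds h (k : ℤ) B hBsub hBcard
      rw [hBsum] at hlo hhi
      have hhr : (h : ℤ) ≤ (r : ℤ) := by exact_mod_cast hh2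
      have h1h : (1 : ℤ) ≤ (h : ℤ) := by exact_mod_cast hh1
      constructor
      · nlinarith
      · rw [hM]
        nlinarith [mul_nonneg (by linarith : (0:ℤ) ≤ (r:ℤ) - (h:ℤ))
          (by linarith : (0:ℤ) ≤ 2*(k:ℤ) - (r:ℤ) - (h:ℤ) + 1)]
    · rintro ⟨hx1, hx2⟩
      rw [hM] at hx2
      obtain ⟨h, hh1, hh2, hlo, hhi⟩ := find_h r k hr hrk x hx1 (by linarith)
      have hhk : (h : ℤ) ≤ (k : ℤ) := by exact_mod_cast (show h ≤ k by omega)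
      obtain ⟨B, hBsub, hBcard, hBsum⟩ := exists_subset h (k : ℤ) x hhk hlo hhi
      exact ⟨h, ⟨hh1, hh2⟩, B, ⟨hBsub, hBcard⟩, hBsum⟩
  rw [key, Int.card_Icc]
  simp
end

section
/- Let A be a set of k nonnegative integers with 0 ∉ A, and let H = {0, 1, …, r} with r ≤ k. Then |H^A| ≥ rk − r(r−1)/2 + 1. -/
open Finset Pointwise

theorem restricted_sumset_card_lower_bound_interval (k r : ℕ) (A : Finset ℤ)
    (hAnonneg : ∀ a ∈ A, 0 ≤ a) (h0A : (0 : ℤ) ∉ A)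
    (hk : A.card = k) (hrk : r ≤ k) :
    r * k - r * (r - 1) / 2 + 1 ≤ (rSumH (Finset.Icc 0 r) A).card := by
  classical
  set e := A.orderEmbOfFin hk with he
  set a : ℕ → ℤ := fun i => if h : i < k then e ⟨i, h⟩ else 0 with ha
  have haA : ∀ i, i < k → a i ∈ A := by
    intro i hi; simp only [ha, dif_pos hi]; exact A.orderEmbOfFin_mem hk ⟨i, hi⟩
  have hapos : ∀ i, i < k → 0 < a i := by
    intro i hi
    have := hAnonneg _ (haA i hi)
    rcases this.lt_or_eq with h | h
    · exact h
    · exact absurd (h ▸ haA i hi) h0A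
  have hamono : ∀ i j, i < j → j < k → a i < a j := by
    intro i j hij hj
    have hi : i < k := hij.trans hj
    simp only [ha, dif_pos hi, dif_pos hj]
    exact e.strictMono (show (⟨i, hi⟩ : Fin k) < ⟨j, hj⟩ from hij)
  have hainj : ∀ i j, i < k → j < k → a i = a j → i = j := by
    intro i j hi hj hij
    rcases lt_trichotomy i j with h | h | h
    · exact absurd hij (hamono i j h hj).ne
    · exact h
    · exact absurd hij.symm (hamono j i h hi).ne
  set top : ℕ → ℤ := fun m => ∑ j ∈ Finset.Ico (k - m) k, a j with htop
  have key : ∀ m, m ≤ k → ∃ S : Finset ℤ,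
      S ⊆ rSumH (Finset.Icc 0 m) A ∧
      S.card = m * k - m * (m - 1) / 2 + 1 ∧
      (∀ x ∈ S, x ≤ top m) ∧ top m ∈ S := by
    intro m
    induction m with
    | zero =>
      intro _
      refine ⟨{0}, ?_, by simp, ?_, ?_⟩
      · intro x hx
        simp only [Finset.mem_singleton] at hx
        subst hx
        rw [rSumH, Finset.mem_biUnion]
        refine ⟨0, by simp, ?_⟩
        rw [rSum, Finset.mem_image]
        exact ⟨∅, by simp, by simp⟩
      · intro x hx
        simp only [Finset.mem_singleton] at hx
        simp [hx, htop]
      · simp [htop]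
    | succ m ih =>
      intro hm1
      have hm : m ≤ k := Nat.le_of_succ_le hm1
      obtain ⟨S, hsub, hcard, hle, htopmem⟩ := ih hm
      -- new elements
      set E : Finset ℤ := (Finset.range (k - m)).image (fun i => a i + top m) with hE
      have hEmem : ∀ x ∈ E, x ∈ rSum (m + 1) A := by
        intro x hx
        rw [hE, Finset.mem_image] at hx
        obtain ⟨i, hi, rfl⟩ := hx
        rw [Finset.mem_range] at hi
        have hik : i < k := lt_of_lt_of_le hi (Nat.sub_le k m)
        have hinotin : i ∉ Finset.Ico (k - m) k := by
          simp only [Finset.mem_Ico]; omega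
        set B : Finset ℕ := insert i (Finset.Ico (k - m) k) with hB
        have hBk : ∀ j ∈ B, j < k := by
          intro j hj
          rw [hB, Finset.mem_insert, Finset.mem_Ico] at hj
          rcases hj with rfl | hj
          · exact hik
          · exact hj.2
        have hinjB : Set.InjOn a B := by
          intro x hx y hy hxy
          exact hainj x y (hBk x hx) (hBk y hy) hxy
        rw [rSum, Finset.mem_image]
        refine ⟨B.image a, ?_, ?_⟩
        · rw [Finset.mem_powersetCard]
          constructor
          · intro y hy
            rw [Finset.mem_image] at hy
            obtain ⟨j, hj, rfl⟩ := hy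
            exact haA j (hBk j hj)
          · rw [Finset.card_image_of_injOn hinjB, hB,
              Finset.card_insert_of_notMem hinotin, Nat.card_Ico]
            omega
        · rw [Finset.sum_image (fun x hx y hy => hinjB hx hy)]
          rw [hB, Finset.sum_insert hinotin]
          rfl
      have hEgt : ∀ x ∈ E, top m < x := by
        intro x hx
        rw [hE, Finset.mem_image] at hx
        obtain ⟨i, hi, rfl⟩ := hx
        rw [Finset.mem_range] at hi
        have hik : i < k := lt_of_lt_of_le hi (Nat.sub_le k m)
        have := hapos i hik
        omega
      have hEcard : E.card = k - m := by
        rw [hE, Finset.card_image_of_injOn, Finset.card_range]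
        intro x hx y hy hxy
        simp only [Finset.coe_range, Set.mem_Iio] at hx hy
        have hxy' : a x + top m = a y + top m := hxy
        exact hainj x y (lt_of_lt_of_le hx (Nat.sub_le k m))
          (lt_of_lt_of_le hy (Nat.sub_le k m)) (add_right_cancel hxy')
      have htopsucc : top (m + 1) = a (k - m - 1) + top m := by
        have h1 : k - (m + 1) < k := by omega
        show (∑ j ∈ Finset.Ico (k - (m + 1)) k, a j)
            = a (k - m - 1) + ∑ j ∈ Finset.Ico (k - m) k, a j
        rw [Finset.sum_eq_sum_Ico_succ_bot h1]
        have h2 : k - (m + 1) + 1 = k - m := by omega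
        have h3 : k - (m + 1) = k - m - 1 := by omega
        rw [h2, h3]
      have htopsuccE : top (m + 1) ∈ E := by
        rw [hE, Finset.mem_image]
        refine ⟨k - m - 1, ?_, htopsucc.symm⟩
        rw [Finset.mem_range]; omega
      have hdisj : Disjoint S E := by
        rw [Finset.disjoint_left]
        intro x hx hxE
        exact absurd (hle x hx) (not_le.mpr (hEgt x hxE))
      refine ⟨S ∪ E, ?_, ?_, ?_, ?_⟩
      · intro x hx
        rw [Finset.mem_union] at hx
        rcases hx with hx | hx
        · have := hsub hx
          rw [rSumH, Finset.mem_biUnion] at this ⊢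
          obtain ⟨h, hh, hmem⟩ := this
          exact ⟨h, by simp only [Finset.mem_Icc] at hh ⊢; omega, hmem⟩
        · rw [rSumH, Finset.mem_biUnion]
          exact ⟨m + 1, by simp, hEmem x hx⟩
      · rw [Finset.card_union_of_disjoint hdisj, hcard, hEcard]
        have e1 : (m + 1) * k = m * k + k := by ring
        have e2 : (m + 1) * (m + 1 - 1) = m * (m - 1) + 2 * m := by
          cases m with
          | zero => rfl
          | succ n => simp [Nat.succ_sub_one]; ring
        have e3 : m * (m - 1) ≤ m * k := Nat.mul_le_mul_left m (by omega)
        omega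
      · intro x hx
        rw [Finset.mem_union] at hx
        have hstep : top m < top (m + 1) := by
          rw [htopsucc]
          have := hapos (k - m - 1) (by omega)
          omega
        rcases hx with hx | hx
        · exact le_of_lt (lt_of_le_of_lt (hle x hx) hstep)
        · rw [hE, Finset.mem_image] at hx
          obtain ⟨i, hi, rfl⟩ := hx
          rw [Finset.mem_range] at hi
          rw [htopsucc]
          have : a i ≤ a (k - m - 1) := by
            rcases Nat.lt_or_ge i (k - m - 1) with h | h
            · exact le_of_lt (hamono i (k - m - 1) h (by omega))
            · have : i = k - m - 1 := by omega
              rw [this]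
          omega
      · exact Finset.mem_union_right S htopsuccE
  obtain ⟨S, hsub, hcard, _, _⟩ := key r hrk
  calc r * k - r * (r - 1) / 2 + 1 = S.card := hcard.symm
    _ ≤ (rSumH (Finset.Icc 0 r) A).card := Finset.card_le_card hsub
end

section
/- Let A be a set of k nonnegative integers with 0 ∈ A, and let H = {0, 1, …, r} with r ≤ k−1. Then |H^A| ≥ rk − r(r+1)/2 + 1. -/
open Finset Pointwise

private theorem rsum_aux (k : ℕ) (A : Finset ℤ) (f : ℕ → ℤ)
    (hk1 : 1 ≤ k)
    (fmem : ∀ n, n < k → f n ∈ A)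
    (fnonneg : ∀ n, n < k → 0 ≤ f n)
    (fmono : ∀ i j, i < j → j < k → f i < f j) :
    ∀ m, m ≤ k - 1 → ∃ S : Finset ℤ,
      (∀ x ∈ S, x ∈ rSumH (Finset.Icc 0 m) A) ∧
      (∀ x ∈ S, x ≤ ∑ j ∈ Finset.range m, f (k - 1 - j)) ∧
      m * k - m * (m + 1) / 2 + 1 ≤ S.card := by
  have fmono' : ∀ i j, i ≤ j → j < k → f i ≤ f j := by
    intro i j hij hj
    rcases eq_or_lt_of_le hij with h | h
    · rw [h]
    · exact (fmono i j h hj).le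
  have finj : ∀ i j, i < k → j < k → f i = f j → i = j := by
    intro i j hi hj hfij
    by_contra hne
    rcases Nat.lt_or_ge i j with h | h
    · exact absurd hfij (fmono i j h hj).ne
    · have hji : j < i := by omega
      exact absurd hfij.symm (fmono j i hji hi).ne
  set T : ℕ → ℤ := fun m => ∑ j ∈ Finset.range m, f (k - 1 - j) with hT
  set B : ℕ → Finset ℤ := fun m => (Finset.range m).image (fun j => f (k - 1 - j)) with hB
  intro m
  induction m with
  | zero =>
    intro _
    refine ⟨{0}, ?_, ?_, ?_⟩
    · intro x hx
      simp only [Finset.mem_singleton] at hx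
      subst hx
      have : (0 : ℤ) ∈ rSum 0 A := by simp [rSum]
      simp only [rSumH, Finset.mem_biUnion]
      exact ⟨0, by simp, this⟩
    · intro x hx
      simp only [Finset.mem_singleton] at hx
      simp [hx]
    · simp
  | succ m ih =>
    intro hm
    have hmk : m ≤ k - 1 := by omega
    obtain ⟨S, hSmem, hSle, hScard⟩ := ih hmk
    -- properties of B m
    have hBsub : B m ⊆ A := by
      intro x hx
      simp only [hB, Finset.mem_image, Finset.mem_range] at hx
      obtain ⟨j, hj, rfl⟩ := hx
      have : k - 1 - j < k := by omega
      exact fmem _ this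
    have hBinj : Set.InjOn (fun j => f (k - 1 - j)) (Finset.range m) := by
      intro i hi j hj hij
      simp only [Finset.coe_range, Set.mem_Iio] at hi hj
      simp only at hij
      have hik : k - 1 - i < k := by omega
      have hjk : k - 1 - j < k := by omega
      have := finj (k - 1 - i) (k - 1 - j) hik hjk hij
      omega
    have hBcard : (B m).card = m := by
      rw [hB, Finset.card_image_of_injOn hBinj, Finset.card_range]
    have hBsum : (B m).sum id = T m := by
      rw [hB, hT]
      exact Finset.sum_image (fun i hi j hj h => hBinj (by simpa using hi) (by simpa using hj) h)
    -- new elements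
    set New : Finset ℤ := (Finset.Icc 1 (k - 1 - m)).image (fun i => f i + T m) with hNew
    have hNewmem : ∀ x ∈ New, x ∈ rSum (m + 1) A := by
      intro x hx
      simp only [hNew, Finset.mem_image, Finset.mem_Icc] at hx
      obtain ⟨i, ⟨hi1, hi2⟩, rfl⟩ := hx
      have hik : i < k := by omega
      have hfiB : f i ∉ B m := by
        intro hmem
        simp only [hB, Finset.mem_image, Finset.mem_range] at hmem
        obtain ⟨j, hj, hfij⟩ := hmem
        have hjk : k - 1 - j < k := by omega
        have : k - 1 - j = i := finj _ _ hjk hik hfij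
        omega
      refine Finset.mem_image.mpr ⟨insert (f i) (B m), ?_, ?_⟩
      · rw [Finset.mem_powersetCard]
        constructor
        · exact Finset.insert_subset (fmem i hik) hBsub
        · rw [Finset.card_insert_of_notMem hfiB, hBcard]
      · rw [Finset.sum_insert hfiB, hBsum]
        simp
    have hNewgt : ∀ x ∈ New, T m < x := by
      intro x hx
      simp only [hNew, Finset.mem_image, Finset.mem_Icc] at hx
      obtain ⟨i, ⟨hi1, hi2⟩, rfl⟩ := hx
      have hik : i < k := by omega
      have h0k : 0 < k := by omega
      have h0i : 0 < i := by omega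
      have : 0 < f i := lt_of_le_of_lt (fnonneg 0 h0k) (fmono 0 i h0i hik)
      omega
    have hNewcard : New.card = k - 1 - m := by
      rw [hNew, Finset.card_image_of_injOn, Nat.card_Icc]
      · omega
      · intro i hi j hj hij
        simp only [Finset.coe_Icc, Set.mem_Icc] at hi hj
        simp only at hij
        have hik' : i < k := by omega
        have hjk' : j < k := by omega
        have : f i = f j := by omega
        exact finj i j hik' hjk' this
    have hdisj : Disjoint S New := by
      rw [Finset.disjoint_left]
      intro x hxS hxN
      exact absurd (hSle x hxS) (not_le.mpr (hNewgt x hxN))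
    refine ⟨S ∪ New, ?_, ?_, ?_⟩
    · intro x hx
      rcases Finset.mem_union.mp hx with h | h
      · have := hSmem x h
        simp only [rSumH, Finset.mem_biUnion] at this ⊢
        obtain ⟨h', hh', hx'⟩ := this
        exact ⟨h', by simp only [Finset.mem_Icc] at hh' ⊢; omega, hx'⟩
      · simp only [rSumH, Finset.mem_biUnion]
        exact ⟨m + 1, by simp, hNewmem x h⟩
    · intro x hx
      rw [Finset.sum_range_succ]
      have hTm : T m = ∑ j ∈ Finset.range m, f (k - 1 - j) := rfl
      rcases Finset.mem_union.mp hx with h | h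
      · have h1 := hSle x h
        have hkm : k - 1 - m < k := by omega
        have hnn := fnonneg (k - 1 - m) hkm
        omega
      · simp only [hNew, Finset.mem_image, Finset.mem_Icc] at h
        obtain ⟨i, ⟨hi1, hi2⟩, rfl⟩ := h
        have hkm : k - 1 - m < k := by omega
        have h2 := fmono' i (k - 1 - m) hi2 hkm
        rw [hTm]
        omega
    · rw [Finset.card_union_of_disjoint hdisj, hNewcard]
      have e1 : (m + 1) * k = m * k + k := by ring
      have e2 : (m + 1) * (m + 1 + 1) = m * (m + 1) + 2 * (m + 1) := by ring
      omega

theorem restricted_sumset_card_lower_bound_interval_zero_mem (k r : ℕ) (A : Finset ℤ)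
    (hAnonneg : ∀ a ∈ A, 0 ≤ a) (h0A : (0 : ℤ) ∈ A)
    (hk : A.card = k) (hrk : r ≤ k - 1) :
    r * k - r * (r + 1) / 2 + 1 ≤ (rSumH (Finset.Icc 0 r) A).card := by
  have hk1 : 1 ≤ k := by
    have : 0 < A.card := Finset.card_pos.mpr ⟨0, h0A⟩
    omega
  set a : Fin k ↪o ℤ := A.orderEmbOfFin hk with ha
  set f : ℕ → ℤ := fun n => if h : n < k then a ⟨n, h⟩ else 0 with hf
  have fmem : ∀ n, n < k → f n ∈ A := by
    intro n hn
    simp only [hf, dif_pos hn]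
    exact Finset.orderEmbOfFin_mem A hk ⟨n, hn⟩
  have fnonneg : ∀ n, n < k → 0 ≤ f n := fun n hn => hAnonneg _ (fmem n hn)
  have fmono : ∀ i j, i < j → j < k → f i < f j := by
    intro i j hij hj
    have hi : i < k := hij.trans hj
    simp only [hf, dif_pos hi, dif_pos hj]
    exact a.strictMono (show (⟨i, hi⟩ : Fin k) < ⟨j, hj⟩ from hij)
  obtain ⟨S, hSmem, _, hScard⟩ := rsum_aux k A f hk1 fmem fnonneg fmono r hrk
  calc r * k - r * (r + 1) / 2 + 1 ≤ S.card := hScard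
    _ ≤ (rSumH (Finset.Icc 0 r) A).card := Finset.card_le_card hSmem
end

section
/- Let A be a set of k ≥ 7 nonnegative integers with 0 ∉ A, and let H = {0, 1, …, r} with 2 ≤ r ≤ k−1. If |H^A| = rk − r(r−1)/2 + 1, then A = {d, 2d, …, kd} for some positive integer d. -/
open Finset Pointwise

lemma aux_gauss (r k : ℕ) (h : r ≤ k) :
    ∑ i ∈ Finset.range r, (k - i) = r * k - r * (r - 1) / 2 := by
  induction r with
  | zero => simp
  | succ s ih =>
    rw [Finset.sum_range_succ, ih (by omega)]
    rcases Nat.eq_zero_or_pos s with rfl | hs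
    · simp
    obtain ⟨t, rfl⟩ : ∃ t, s = t + 1 := ⟨s - 1, by omega⟩
    simp only [Nat.add_sub_cancel]
    have h2 : (t+1+1)*(t+1) = (t+1)*t + 2*(t+1) := by ring
    have h3 : (t+1)*t ≤ (t+1)*k := Nat.mul_le_mul_left _ (by omega)
    have h4 : 2 ∣ (t+1)*t := by
      rw [Nat.mul_comm]; exact (Nat.even_mul_succ_self t).two_dvd
    have h5 : (t+1+1)*k = (t+1)*k + k := by ring
    rw [h2, h5]
    omega

set_option maxHeartbeats 1600000 in
theorem restricted_sumset_card_inverse_interval (k r : ℕ) (hk7 : 7 ≤ k)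
    (hr2 : 2 ≤ r) (hrk : r ≤ k - 1)
    (A : Finset ℤ) (hAnonneg : ∀ a ∈ A, 0 ≤ a) (h0A : (0 : ℤ) ∉ A) (hk : A.card = k)
    (heq : (rSumH (Finset.Icc 0 r) A).card = r * k - r * (r - 1) / 2 + 1) :
    ∃ d : ℤ, 0 < d ∧ A = (Finset.Icc 1 k).image (fun i : ℕ => (i : ℤ) * d) := by
  classical
  have hrk' : r + 1 ≤ k := by omega
  set e := A.orderEmbOfFin hk with he
  set aa : ℕ → ℤ := fun i => if hi : i < k then e ⟨i, hi⟩ else 0 with haadef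
  have haaA : ∀ i, i < k → aa i ∈ A := by
    intro i hi
    simp only [haadef, dif_pos hi]
    exact A.orderEmbOfFin_mem hk _
  have haapos : ∀ i, i < k → 0 < aa i := by
    intro i hi
    have h1 := hAnonneg _ (haaA i hi)
    have h2 : aa i ≠ 0 := fun h => h0A (h ▸ haaA i hi)
    omega
  have haamono : ∀ i j, i < j → j < k → aa i < aa j := by
    intro i j hij hj
    have hi : i < k := lt_trans hij hj
    simp only [haadef, dif_pos hi, dif_pos hj]
    exact e.strictMono (show (⟨i, hi⟩ : Fin k) < ⟨j, hj⟩ from hij)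
  have haamono' : ∀ i j, i ≤ j → j < k → aa i ≤ aa j := by
    intro i j hij hj
    rcases eq_or_lt_of_le hij with rfl | h
    · exact le_refl _
    · exact le_of_lt (haamono i j h hj)
  have haasurj : ∀ a ∈ A, ∃ i, i < k ∧ aa i = a := by
    intro a ha
    have h1 : a ∈ Set.range e := by
      rw [he, Finset.range_orderEmbOfFin]; exact ha
    obtain ⟨i, hi⟩ := h1
    refine ⟨i.1, i.2, ?_⟩
    simp only [haadef, dif_pos i.2]
    rw [← hi]
  -- top sums
  set T : ℕ → ℤ := fun m => ∑ i ∈ Finset.Ico (k - m) k, aa i with hTdef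
  have hT0 : T 0 = 0 := by simp [hTdef]
  have hTsucc : ∀ m, m < k → T (m + 1) = aa (k - (m + 1)) + T m := by
    intro m hm
    simp only [hTdef]
    rw [Finset.sum_eq_sum_Ico_succ_bot (show k - (m+1) < k by omega),
      show k - (m+1) + 1 = k - m from by omega]
  have hTnn : ∀ m, 0 ≤ T m := by
    intro m
    apply Finset.sum_nonneg
    intro i hi
    exact le_of_lt (haapos i (Finset.mem_Ico.mp hi).2)
  have hTmono : ∀ m n, m ≤ n → T m ≤ T n := by
    intro m n hmn
    simp only [hTdef]
    apply Finset.sum_le_sum_of_subset_of_nonneg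
    · intro x hx
      simp only [Finset.mem_Ico] at *
      omega
    · intro i hi _
      exact le_of_lt (haapos i (Finset.mem_Ico.mp hi).2)
  have hT1 : T 1 = aa (k - 1) := by
    have h1 := hTsucc 0 (by omega)
    rw [hT0] at h1
    simpa using h1
  have hT2 : T 2 = aa (k - 2) + aa (k - 1) := by
    have h1 := hTsucc 1 (by omega)
    rw [hT1] at h1
    exact h1
  -- the chain set
  set lev : ℕ → Finset ℤ := fun h => (Finset.range (k - h + 1)).image (fun j => aa j + T (h - 1)) with hlevdef
  set C : Finset ℤ := insert 0 ((Finset.Icc 1 r).biUnion lev) with hCdef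
  -- chain elements are in the restricted sumsets
  have hrmem : ∀ h, 1 ≤ h → h ≤ r → ∀ j, j ≤ k - h → aa j + T (h - 1) ∈ rSum h A := by
    intro h h1 h2 j hj
    have hjk : j < k := by omega
    have hjlt : j < k - (h - 1) := by omega
    set B : Finset ℤ := insert (aa j) ((Finset.Ico (k - (h - 1)) k).image aa) with hBdef
    have hinj : ∀ x ∈ Finset.Ico (k - (h - 1)) k, ∀ y ∈ Finset.Ico (k - (h - 1)) k,
        aa x = aa y → x = y := by
      intro x hx y hy hxy
      simp only [Finset.mem_Ico] at hx hy
      by_contra hne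
      rcases lt_or_gt_of_ne hne with hlt | hlt
      · exact absurd hxy (ne_of_lt (haamono _ _ hlt hy.2))
      · exact absurd hxy.symm (ne_of_lt (haamono _ _ hlt hx.2))
    have hinj' : Set.InjOn aa ↑(Finset.Ico (k - (h - 1)) k) := by
      intro x hx y hy hxy
      exact hinj x (by simpa using hx) y (by simpa using hy) hxy
    have hnotmem : aa j ∉ (Finset.Ico (k - (h - 1)) k).image aa := by
      simp only [Finset.mem_image, Finset.mem_Ico]
      rintro ⟨x, ⟨hx1, hx2⟩, hx3⟩
      have hjx : j < x := by omega
      exact absurd hx3 (ne_of_gt (haamono j x hjx hx2))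
    have hcard : B.card = h := by
      rw [hBdef, Finset.card_insert_of_notMem hnotmem,
        Finset.card_image_of_injOn hinj', Nat.card_Ico]
      omega
    have hsub : B ⊆ A := by
      intro x hx
      rw [hBdef] at hx
      rcases Finset.mem_insert.mp hx with rfl | hx
      · exact haaA j hjk
      · obtain ⟨y, hy, rfl⟩ := Finset.mem_image.mp hx
        exact haaA y (Finset.mem_Ico.mp hy).2
    have hsum : B.sum id = aa j + T (h - 1) := by
      rw [hBdef, Finset.sum_insert hnotmem, Finset.sum_image hinj]
      simp [hTdef]
    exact Finset.mem_image.mpr ⟨B, Finset.mem_powersetCard.mpr ⟨hsub, hcard⟩, hsum⟩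
  have h0mem : (0 : ℤ) ∈ rSumH (Finset.Icc 0 r) A := by
    apply Finset.mem_biUnion.mpr
    refine ⟨0, by simp, ?_⟩
    simp [rSum]
  have hCsub : C ⊆ rSumH (Finset.Icc 0 r) A := by
    intro x hx
    rw [hCdef] at hx
    rcases Finset.mem_insert.mp hx with rfl | hx
    · exact h0mem
    obtain ⟨h, hh, hx⟩ := Finset.mem_biUnion.mp hx
    simp only [Finset.mem_Icc] at hh
    simp only [hlevdef, Finset.mem_image, Finset.mem_range] at hx
    obtain ⟨j, hj, rfl⟩ := hx
    exact Finset.mem_biUnion.mpr ⟨h, by simp only [Finset.mem_Icc]; omega,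
      hrmem h hh.1 hh.2 j (by omega)⟩
  -- cardinality of C
  have hlevcard : ∀ h, 1 ≤ h → h ≤ r → (lev h).card = k - h + 1 := by
    intro h h1 h2
    rw [hlevdef]
    rw [Finset.card_image_of_injOn, Finset.card_range]
    intro x hx y hy hxy
    simp only [Finset.coe_range, Set.mem_Iio] at hx hy
    have hx' : x < k := by omega
    have hy' : y < k := by omega
    have hxy' : aa x = aa y := by linarith [add_right_cancel hxy]
    by_contra hne
    rcases lt_or_gt_of_ne hne with hlt | hlt
    · exact absurd hxy' (ne_of_lt (haamono _ _ hlt hy'))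
    · exact absurd hxy'.symm (ne_of_lt (haamono _ _ hlt hx'))
  have hlevbound : ∀ h, 1 ≤ h → h ≤ r → ∀ x ∈ lev h, T (h - 1) < x ∧ x ≤ T h := by
    intro h h1 h2 x hx
    simp only [hlevdef, Finset.mem_image, Finset.mem_range] at hx
    obtain ⟨j, hj, rfl⟩ := hx
    constructor
    · have := haapos j (by omega); linarith
    · have hTh : T h = aa (k - h) + T (h - 1) := by
        have h3 := hTsucc (h - 1) (by omega)
        rw [show h - 1 + 1 = h by omega] at h3
        exact h3
      have h4 : aa j ≤ aa (k - h) := haamono' j (k - h) (by omega) (by omega)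
      linarith
  have hdisj : ∀ h1 ∈ Finset.Icc 1 r, ∀ h2 ∈ Finset.Icc 1 r, h1 ≠ h2 →
      Disjoint (lev h1) (lev h2) := by
    have key : ∀ h1 h2, 1 ≤ h1 → h2 ≤ r → h1 < h2 → Disjoint (lev h1) (lev h2) := by
      intro h1 h2 hh1 hh2 hlt
      rw [Finset.disjoint_left]
      intro x hx1 hx2
      have b1 := hlevbound h1 hh1 (by omega) x hx1
      have b2 := hlevbound h2 (by omega) hh2 x hx2
      have : T h1 ≤ T (h2 - 1) := hTmono h1 (h2 - 1) (by omega)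
      linarith
    intro h1 hh1 h2 hh2 hne
    simp only [Finset.mem_Icc] at hh1 hh2
    rcases lt_or_gt_of_ne hne with hlt | hlt
    · exact key h1 h2 hh1.1 hh2.2 hlt
    · exact (key h2 h1 hh2.1 hh1.2 hlt).symm
  have h0notmem : (0 : ℤ) ∉ (Finset.Icc 1 r).biUnion lev := by
    intro h0
    obtain ⟨h, hh, hx⟩ := Finset.mem_biUnion.mp h0
    simp only [Finset.mem_Icc] at hh
    have := hlevbound h hh.1 hh.2 0 hx
    have := hTnn (h - 1)
    linarith
  have hCcard : C.card = r * k - r * (r - 1) / 2 + 1 := by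
    rw [hCdef, Finset.card_insert_of_notMem h0notmem, Finset.card_biUnion hdisj]
    have hsum : ∑ h ∈ Finset.Icc 1 r, (lev h).card = ∑ h ∈ Finset.Icc 1 r, (k - h + 1) :=
      Finset.sum_congr rfl fun h hh => by
        simp only [Finset.mem_Icc] at hh; exact hlevcard h hh.1 hh.2
    rw [hsum, ← Finset.Ico_add_one_right_eq_Icc, Finset.sum_Ico_eq_sum_range,
      show r + 1 - 1 = r from by omega]
    have h1 : ∑ i ∈ Finset.range r, (k - (1 + i) + 1) = ∑ i ∈ Finset.range r, (k - i) :=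
      Finset.sum_congr rfl fun i hi => by
        simp only [Finset.mem_range] at hi; omega
    rw [h1, aux_gauss r k (by omega)]
  -- the sumset equals the chain
  have hCeq : rSumH (Finset.Icc 0 r) A = C :=
    (Finset.eq_of_subset_of_card_le hCsub (by rw [heq, hCcard])).symm
  -- membership characterization
  have hmemC : ∀ x ∈ C, x = 0 ∨ ∃ h, 1 ≤ h ∧ h ≤ r ∧ ∃ j, j ≤ k - h ∧ x = aa j + T (h - 1) := by
    intro x hx
    rw [hCdef] at hx
    rcases Finset.mem_insert.mp hx with rfl | hx
    · exact Or.inl rfl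
    obtain ⟨h, hh, hx⟩ := Finset.mem_biUnion.mp hx
    simp only [Finset.mem_Icc] at hh
    simp only [hlevdef, Finset.mem_image, Finset.mem_range] at hx
    obtain ⟨j, hj, rfl⟩ := hx
    exact Or.inr ⟨h, hh.1, hh.2, j, by omega, rfl⟩
  have hmemA : ∀ x ∈ C, 0 < x → x ≤ aa (k - 1) → ∃ j, j < k ∧ x = aa j := by
    intro x hx hx0 hxk
    rcases hmemC x hx with rfl | ⟨h, h1, h2, j, hj, rfl⟩
    · exact absurd hx0 (lt_irrefl 0)
    rcases eq_or_lt_of_le h1 with h1' | h1'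
    · refine ⟨j, by omega, ?_⟩
      rw [← h1', hT0]
      ring
    · exfalso
      have hjk : j < k := by omega
      have ha : aa 0 ≤ aa j := haamono' 0 j (by omega) hjk
      have hb : T 1 ≤ T (h - 1) := hTmono 1 (h - 1) (by omega)
      have hc := haapos 0 (by omega)
      rw [hT1] at hb
      linarith
  have hmem2 : ∀ x ∈ C, aa (k - 1) < x → x < aa 0 + T 2 →
      ∃ m, m ≤ k - 2 ∧ x = aa m + aa (k - 1) := by
    intro x hx hxl hxu
    rcases hmemC x hx with rfl | ⟨h, h1, h2, j, hj, rfl⟩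
    · exact absurd hxl (not_lt.mpr (le_of_lt (haapos (k - 1) (by omega))))
    rcases eq_or_lt_of_le h1 with h1' | h1'
    · exfalso
      rw [← h1', hT0] at hxl
      have : aa j ≤ aa (k - 1) := haamono' j (k - 1) (by omega) (by omega)
      linarith
    rcases eq_or_lt_of_le (show 2 ≤ h by omega) with h2' | h2'
    · refine ⟨j, by omega, ?_⟩
      rw [← h2', hT1]
    · exfalso
      have hjk : j < k := by omega
      have ha : aa 0 ≤ aa j := haamono' 0 j (by omega) hjk
      have hb : T 2 ≤ T (h - 1) := hTmono 2 (h - 1) (by omega)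
      linarith
  -- two-fold sums are in C
  have hsum2 : ∀ i j, i < j → j < k → aa i + aa j ∈ C := by
    intro i j hij hj
    rw [← hCeq]
    apply Finset.mem_biUnion.mpr
    refine ⟨2, by simp only [Finset.mem_Icc]; omega, ?_⟩
    have hne : aa i ≠ aa j := ne_of_lt (haamono i j hij hj)
    refine Finset.mem_image.mpr ⟨{aa i, aa j}, ?_, ?_⟩
    · rw [Finset.mem_powersetCard]
      constructor
      · intro x hx
        rcases Finset.mem_insert.mp hx with rfl | hx
        · exact haaA i (lt_trans hij hj)
        · rw [Finset.mem_singleton.mp hx]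
          exact haaA j hj
      · rw [Finset.card_insert_of_notMem (by simpa using hne), Finset.card_singleton]
    · rw [Finset.sum_pair hne]; simp only [id_eq]
  -- Step 4: a_0 + a_j ∈ A for 1 ≤ j ≤ k-2
  have hstep4 : ∀ j, 1 ≤ j → j ≤ k - 2 → ∃ m, j < m ∧ m < k ∧ aa 0 + aa j = aa m := by
    intro j hj1 hj2
    have hjk : j < k := by omega
    have hx : aa 0 + aa j ∈ C := hsum2 0 j (by omega) hjk
    have hpos : 0 < aa 0 + aa j := by
      have := haapos 0 (by omega); have := haapos j hjk; linarith
    by_cases hle : aa 0 + aa j ≤ aa (k - 1)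
    · obtain ⟨m, hm, hmeq⟩ := hmemA _ hx hpos hle
      refine ⟨m, ?_, hm, hmeq⟩
      by_contra h'
      push_neg at h'
      have h'' : aa m ≤ aa j := haamono' m j h' hjk
      have := haapos 0 (by omega)
      linarith
    · exfalso
      push_neg at hle
      have hub : aa 0 + aa j < aa 0 + T 2 := by
        rw [hT2]
        have h1 : aa j ≤ aa (k - 2) := haamono' j (k - 2) hj2 (by omega)
        have h2 := haapos (k - 1) (by omega)
        linarith
      obtain ⟨m, hm, hmeq⟩ := hmem2 _ hx hle hub
      have h1 : aa j < aa (k - 1) := haamono j (k - 1) (by omega) (by omega)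
      have h3 : aa 0 ≤ aa m := haamono' 0 m (by omega) (by omega)
      linarith
  -- Step 4': downward induction gives a_0 + a_j = a_{j+1}
  have hstep4' : ∀ t, t ≤ k - 3 → aa 0 + aa (k - 2 - t) = aa (k - 1 - t) := by
    intro t
    induction t with
    | zero =>
      intro _
      obtain ⟨m, hm1, hm2, hm3⟩ := hstep4 (k - 2) (by omega) (le_refl _)
      have hmk : m = k - 1 := by omega
      rw [hmk] at hm3
      simpa using hm3
    | succ t ih =>
      intro ht
      have iht := ih (by omega)
      obtain ⟨m, hm1, hm2, hm3⟩ := hstep4 (k - 2 - (t + 1)) (by omega) (by omega)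
      have h1 : aa (k - 2 - (t + 1)) < aa (k - 2 - t) := haamono _ _ (by omega) (by omega)
      have h2 : aa m < aa (k - 1 - t) := by rw [← hm3, ← iht]; linarith
      have h3 : m < k - 1 - t := by
        by_contra h'
        push_neg at h'
        exact absurd h2 (not_lt.mpr (haamono' _ _ h' (by omega)))
      have h4 : m = k - 1 - (t + 1) := by omega
      rw [h4] at hm3
      exact hm3
  have hstep : ∀ j, 1 ≤ j → j ≤ k - 2 → aa 0 + aa j = aa (j + 1) := by
    intro j h1 h2
    have h3 := hstep4' (k - 2 - j) (by omega)
    rw [show k - 2 - (k - 2 - j) = j by omega, show k - 1 - (k - 2 - j) = j + 1 by omega] at h3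
    exact h3
  -- Step 5: a_1 = 2 a_0
  have hstep5 : aa 1 = aa 0 + aa 0 := by
    have hk1 : aa 0 + aa (k - 2) = aa (k - 1) := by
      have := hstep (k - 2) (by omega) (le_refl _)
      rw [show k - 2 + 1 = k - 1 by omega] at this
      exact this
    have hx : aa 1 + aa (k - 2) ∈ C := hsum2 1 (k - 2) (by omega) (by omega)
    have h01 : aa 0 < aa 1 := haamono 0 1 (by omega) (by omega)
    have hl : aa (k - 1) < aa 1 + aa (k - 2) := by rw [← hk1]; linarith
    have hu : aa 1 + aa (k - 2) < aa 0 + T 2 := by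
      rw [hT2]
      have h1 : aa 1 < aa (k - 1) := haamono 1 (k - 1) (by omega) (by omega)
      have h2 := haapos 0 (by omega)
      linarith
    obtain ⟨m, hm, hmeq⟩ := hmem2 _ hx hl hu
    have h0pos := haapos 0 (by omega)
    have h2 : aa m < aa 1 := by linarith
    have h3 : m = 0 := by
      by_contra h'
      have h1m : 1 ≤ m := by omega
      exact absurd h2 (not_lt.mpr (haamono' 1 m h1m (by omega)))
    rw [h3] at hmeq
    linarith
  -- Step 6: a_j = (j+1) a_0
  have hstep6 : ∀ j, j < k → aa j = ((j : ℤ) + 1) * aa 0 := by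
    intro j
    induction j with
    | zero => intro _; push_cast; ring
    | succ j ih =>
      intro hj
      rcases Nat.eq_zero_or_pos j with rfl | hjpos
      · rw [hstep5]; push_cast; ring
      · have h1 := hstep j hjpos (by omega)
        rw [← h1, ih (by omega)]
        push_cast
        ring
  refine ⟨aa 0, haapos 0 (by omega), ?_⟩
  ext x
  simp only [Finset.mem_image, Finset.mem_Icc]
  constructor
  · intro hx
    obtain ⟨i, hik, rfl⟩ := haasurj x hx
    refine ⟨i + 1, ⟨by omega, by omega⟩, ?_⟩
    rw [hstep6 i hik]
    push_cast
    ring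
  · rintro ⟨i, ⟨hi1, hi2⟩, rfl⟩
    have h1 : i - 1 < k := by omega
    have h2 := hstep6 (i - 1) h1
    have h3 : ((i - 1 : ℕ) : ℤ) + 1 = (i : ℤ) := by
      push_cast [Nat.cast_sub hi1]
      ring
    rw [h3] at h2
    rw [← h2]
    exact haaA _ h1
end

section
/- Let A be a set of k ≥ 7 nonnegative integers with 0 ∈ A, and let H = {0, 1, …, r} with 2 ≤ r ≤ k−2. If |H^A| = rk − r(r+1)/2 + 1, then A = {0, d, 2d, …, (k−1)d} for some positive integer d. -/
open Finset Pointwise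

/-!
Write `A = {0 = a 0 < a 1 < ⋯ < a (k - 1)}` and let `T h = topSum a k h` be the sum of the `h`
largest elements. For each `h < r`, the `(h + 1)`-fold restricted sums `a i + T h` with
`1 ≤ i ≤ k - 1 - h` lie in `(T h, T (h + 1)]`, so together with `0` they form
`r * k - r * (r + 1) / 2 + 1` distinct elements of `H^A` (the set `sumChain a k r`). Equality
forces `H^A` to be exactly this chain. Reading the chain in the window `(0, a 1 + a (k - 1))` shows
that each `a 1 + a i` with `2 ≤ i ≤ k - 2` is an element of `A`, hence `a (i + 1) = a 1 + a i` by
downward induction on `i`; locating `a 2 + a (k - 2)` in the window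
`(a (k - 1), a 1 + a (k - 2) + a (k - 1))` gives `a 2 = 2 * a 1`.
-/

theorem Finset.exists_strictMonoOn_image_range {α : Type*} [LinearOrder α] [Inhabited α]
    (A : Finset α) {k : ℕ} (hk : A.card = k) :
    ∃ a : ℕ → α, StrictMonoOn a (Set.Iio k) ∧ (range k).image a = A := by
  let a : ℕ → α := fun i => if h : i < k then A.orderEmbOfFin hk ⟨i, h⟩ else default
  have ha : ∀ i (h : i < k), a i = A.orderEmbOfFin hk ⟨i, h⟩ := fun i h => dif_pos h
  refine ⟨a, fun i hi j hj hij => ?_, ?_⟩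
  · rw [ha i hi, ha j hj]
    exact (A.orderEmbOfFin hk).strictMono hij
  · ext x
    constructor
    · intro hx
      obtain ⟨i, hi, rfl⟩ := mem_image.1 hx
      rw [ha i (mem_range.1 hi)]
      exact A.orderEmbOfFin_mem hk _
    · intro hx
      obtain ⟨i, rfl⟩ : x ∈ Set.range (A.orderEmbOfFin hk) := by
        rwa [range_orderEmbOfFin]
      exact mem_image.2 ⟨i, mem_range.2 i.2, ha i i.2⟩

theorem sum_range_tsub_one_tsub (k r : ℕ) (hr : r ≤ k) :
    ∑ h ∈ range r, (k - 1 - h) = r * k - r * (r + 1) / 2 := by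
  have hdouble : ∀ r ≤ k, 2 * ∑ h ∈ range r, (k - 1 - h) + r * (r + 1) = 2 * (r * k) := by
    intro r hr
    induction r with
    | zero => simp
    | succ n ih =>
      obtain ⟨m, rfl⟩ := Nat.exists_eq_add_of_le hr
      rw [sum_range_succ, show n + 1 + m - 1 - n = m by omega]
      linear_combination ih (by omega)
  have := hdouble r hr
  omega

theorem sum_mem_rSum {ι : Type*} {a : ι → ℤ} {A : Finset ℤ} {B : Finset ι} (hinj : Set.InjOn a B)
    (hB : ∀ j ∈ B, a j ∈ A) : ∑ j ∈ B, a j ∈ rSum B.card A := by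
  refine mem_image.2 ⟨B.image a, mem_powersetCard.2 ⟨?_, card_image_of_injOn hinj⟩, ?_⟩
  · intro x hx
    obtain ⟨j, hj, rfl⟩ := mem_image.1 hx
    exact hB j hj
  · rw [sum_image hinj]
    rfl

theorem sum_mem_rSumH_image_range {a : ℕ → ℤ} {k : ℕ} {H : Finset ℕ} {B : Finset ℕ}
    (hinj : Set.InjOn a (Set.Iio k)) (hB : B ⊆ range k) (hH : B.card ∈ H) :
    ∑ j ∈ B, a j ∈ rSumH H ((range k).image a) := by
  have hB' : (B : Set ℕ) ⊆ Set.Iio k := by simpa [← coe_range] using hB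
  exact mem_biUnion.2 ⟨B.card, hH, sum_mem_rSum (hinj.mono hB')
    fun j hj => mem_image_of_mem a (hB hj)⟩

section SumChain

variable {a : ℕ → ℤ} {k : ℕ}

def topSum (a : ℕ → ℤ) (k m : ℕ) : ℤ :=
  ∑ j ∈ Ico (k - m) k, a j

theorem topSum_zero : topSum a k 0 = 0 := by
  simp [topSum]

theorem topSum_succ {m : ℕ} (hm : m < k) :
    topSum a k (m + 1) = a (k - 1 - m) + topSum a k m := by
  have : Ico (k - (m + 1)) k = insert (k - 1 - m) (Ico (k - m) k) := by
    ext x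
    simp only [mem_Ico, mem_insert]
    omega
  rw [topSum, this, sum_insert (by simp; omega), topSum]

theorem topSum_one (hk : 0 < k) : topSum a k 1 = a (k - 1) := by
  rw [topSum_succ hk, topSum_zero, add_zero, Nat.sub_zero]

theorem topSum_mono (hnonneg : ∀ i < k, 0 ≤ a i) : Monotone (topSum a k) :=
  fun _ _ hmn => sum_le_sum_of_subset_of_nonneg (Ico_subset_Ico_left (by omega))
    fun i hi _ => hnonneg i (mem_Ico.1 hi).2

theorem topSum_nonneg (hnonneg : ∀ i < k, 0 ≤ a i) (m : ℕ) : 0 ≤ topSum a k m :=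
  topSum_zero (a := a) (k := k) ▸ topSum_mono hnonneg (Nat.zero_le m)

def chainLevel (a : ℕ → ℤ) (k h : ℕ) : Finset ℤ :=
  (Icc 1 (k - 1 - h)).image fun i => a i + topSum a k h

def sumChain (a : ℕ → ℤ) (k r : ℕ) : Finset ℤ :=
  insert 0 ((range r).biUnion (chainLevel a k))

theorem nonneg_of_strictMonoOn (ha : StrictMonoOn a (Set.Iio k)) (ha0 : a 0 = 0) {i : ℕ}
    (hik : i < k) : 0 ≤ a i :=
  ha0 ▸ ha.monotoneOn (show _ < k by omega) hik (Nat.zero_le i)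

theorem pos_of_strictMonoOn (ha : StrictMonoOn a (Set.Iio k)) (ha0 : a 0 = 0) {i : ℕ}
    (hi : 0 < i) (hik : i < k) : 0 < a i :=
  ha0 ▸ ha (show _ < k by omega) hik hi

theorem chainLevel_subset_Icc (ha : StrictMonoOn a (Set.Iio k)) (h : ℕ) :
    chainLevel a k h ⊆ Icc (a 1 + topSum a k h) (topSum a k (h + 1)) := by
  intro x hx
  obtain ⟨i, hi, rfl⟩ := mem_image.1 hx
  rw [mem_Icc] at hi
  rw [mem_Icc, topSum_succ (by omega)]
  have hmono := ha.monotoneOn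
  exact ⟨by gcongr; exact hmono (show _ < k by omega) (show _ < k by omega) hi.1,
    by gcongr; exact hmono (show _ < k by omega) (show _ < k by omega) (by omega)⟩

theorem card_chainLevel (ha : StrictMonoOn a (Set.Iio k)) (h : ℕ) :
    (chainLevel a k h).card = k - 1 - h := by
  rw [chainLevel, card_image_of_injOn, Nat.card_Icc, Nat.add_sub_cancel]
  intro i hi j hj hij
  simp only [coe_Icc, Set.mem_Icc] at hi hj
  exact ha.injOn (show _ < k by omega) (show _ < k by omega) (add_right_cancel hij)

theorem card_sumChain (ha : StrictMonoOn a (Set.Iio k)) (ha0 : a 0 = 0) (hk : 1 < k) (r : ℕ) :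
    (sumChain a k r).card = ∑ h ∈ range r, (k - 1 - h) + 1 := by
  have hT := topSum_mono fun i hi => nonneg_of_strictMonoOn ha ha0 hi
  have ha1 := pos_of_strictMonoOn ha ha0 one_pos hk
  have hdisj : ∀ h h', h < h' → Disjoint (chainLevel a k h) (chainLevel a k h') := by
    intro h h' hlt
    refine disjoint_left.2 fun x hx hx' => ?_
    have := mem_Icc.1 (chainLevel_subset_Icc ha h hx)
    have := mem_Icc.1 (chainLevel_subset_Icc ha h' hx')
    have := hT (show h + 1 ≤ h' from hlt)
    linarith
  have h0 : 0 ∉ (range r).biUnion (chainLevel a k) := by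
    simp only [mem_biUnion, not_exists, not_and]
    intro h _ h0
    have := mem_Icc.1 (chainLevel_subset_Icc ha h h0)
    have := topSum_nonneg (fun i hi => nonneg_of_strictMonoOn ha ha0 hi) h
    linarith
  rw [sumChain, card_insert_of_notMem h0, card_biUnion fun h _ h' _ hne => ?_]
  · simp only [card_chainLevel ha]
  · rcases hne.lt_or_gt with hlt | hlt
    exacts [hdisj h h' hlt, (hdisj h' h hlt).symm]

theorem sumChain_subset_rSumH (hinj : Set.InjOn a (Set.Iio k)) (r : ℕ) :
    sumChain a k r ⊆ rSumH (Icc 0 r) ((range k).image a) := by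
  intro x hx
  rcases mem_insert.1 hx with rfl | hx
  · simpa using sum_mem_rSumH_image_range (B := ∅) hinj (empty_subset _) (by simp)
  obtain ⟨h, hh, hx⟩ := mem_biUnion.1 hx
  obtain ⟨i, hi, rfl⟩ := mem_image.1 hx
  rw [mem_range] at hh
  rw [mem_Icc] at hi
  have hi' : i ∉ Ico (k - h) k := by simp; omega
  have hB : insert i (Ico (k - h) k) ⊆ range k := by
    intro j
    simp only [mem_insert, mem_Ico, mem_range]
    omega
  have hcard : (insert i (Ico (k - h) k)).card ∈ Icc 0 r := by
    rw [card_insert_of_notMem hi', Nat.card_Ico, mem_Icc]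
    omega
  have hsum := sum_mem_rSumH_image_range hinj hB hcard
  rwa [sum_insert hi'] at hsum

theorem mem_chainLevel_of_mem_sumChain (ha : StrictMonoOn a (Set.Iio k)) (ha0 : a 0 = 0)
    {r h : ℕ} {x : ℤ} (hx : x ∈ sumChain a k r) (hlo : topSum a k h < x)
    (hhi : x < a 1 + topSum a k (h + 1)) : x ∈ chainLevel a k h := by
  have hnonneg := fun i (hi : i < k) => nonneg_of_strictMonoOn ha ha0 hi
  rcases mem_insert.1 hx with rfl | hx
  · exact absurd hlo (not_lt.2 (topSum_nonneg hnonneg h))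
  obtain ⟨h', -, hx'⟩ := mem_biUnion.1 hx
  have hb := mem_Icc.1 (chainLevel_subset_Icc ha h' hx')
  rcases lt_trichotomy h' h with hlt | rfl | hlt
  · have := topSum_mono hnonneg (show h' + 1 ≤ h from hlt)
    linarith
  · exact hx'
  · have := topSum_mono hnonneg (show h + 1 ≤ h' from hlt)
    linarith

end SumChain

section Rigidity

variable {a : ℕ → ℤ} {k : ℕ}

theorem eq_mul_of_apply_succ (ha0 : a 0 = 0) (hsucc : ∀ i, i + 1 < k → a (i + 1) = a 1 + a i) :
    ∀ i < k, a i = i * a 1 := by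
  intro i hi
  induction i with
  | zero => simp [ha0]
  | succ n ih =>
    rw [hsucc n hi, ih (by omega)]
    push_cast
    ring

theorem apply_succ_eq_one_add_of_mem (ha : StrictMonoOn a (Set.Iio k)) (ha1 : 0 < a 1)
    (hmem : ∀ i, 2 ≤ i → i ≤ k - 2 → ∃ l < k, a 1 + a i = a l) :
    ∀ i, 2 ≤ i → i ≤ k - 2 → a (i + 1) = a 1 + a i := by
  suffices ∀ m i, i + m = k - 2 → 2 ≤ i → a (i + 1) = a 1 + a i from
    fun i hi hik => this (k - 2 - i) i (by omega) hi
  intro m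
  induction m with
  | zero =>
    intro i hm hi
    obtain ⟨l, hl, hal⟩ := hmem i hi (by omega)
    have : i < l := (ha.lt_iff_lt (show i < k by omega) hl).1 (by linarith)
    rw [hal, show l = i + 1 by omega]
  | succ m ih =>
    intro i hm hi
    obtain ⟨l, hl, hal⟩ := hmem i hi (by omega)
    have hnext := ih (i + 1) (by omega) (by omega)
    have hlt : i < l := (ha.lt_iff_lt (show i < k by omega) hl).1 (by linarith)
    have : a i < a (i + 1) := ha (show i < k by omega) (show i + 1 < k by omega) (by omega)
    have hgt : l < i + 1 + 1 := (ha.lt_iff_lt hl (show i + 1 + 1 < k by omega)).1 (by linarith)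
    rw [hal, show l = i + 1 by omega]

theorem eq_mul_of_add_mem_sumChain (ha : StrictMonoOn a (Set.Iio k)) (ha0 : a 0 = 0)
    (hk : 5 ≤ k) {r : ℕ} (hsum : ∀ i j, i < j → j < k → a i + a j ∈ sumChain a k r) :
    ∀ i < k, a i = i * a 1 := by
  have mono : ∀ {i j}, i < j → j < k → a i < a j := fun hij hj =>
    ha (show _ < k by omega) hj hij
  have ha1 : 0 < a 1 := pos_of_strictMonoOn ha ha0 one_pos (by omega)
  have hT1 : topSum a k 1 = a (k - 1) := topSum_one (by omega)
  have hT2 : topSum a k 2 = a (k - 2) + a (k - 1) := by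
    rw [topSum_succ (by omega), hT1, show k - 1 - 1 = k - 2 by omega]
  have hstep : ∀ i, 2 ≤ i → i ≤ k - 2 → a (i + 1) = a 1 + a i := by
    refine apply_succ_eq_one_add_of_mem ha ha1 fun i hi hik => ?_
    have hx := mem_chainLevel_of_mem_sumChain ha ha0 (h := 0) (hsum 1 i (by omega) (by omega))
      (by rw [topSum_zero]; linarith [mono (show 1 < i by omega) (show i < k by omega)])
      (by rw [hT1]; linarith [mono (show i < k - 1 by omega) (show k - 1 < k by omega)])
    obtain ⟨l, hl, hal⟩ := mem_image.1 hx
    exact ⟨l, by rw [mem_Icc] at hl; omega, by rw [← hal, topSum_zero, add_zero]⟩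
  have hlast : a (k - 1) = a 1 + a (k - 2) := by
    rw [← hstep (k - 2) (by omega) le_rfl, show k - 2 + 1 = k - 1 by omega]
  have htwo : a 2 = a 1 + a 1 := by
    have hx := mem_chainLevel_of_mem_sumChain ha ha0 (h := 1)
      (hsum 2 (k - 2) (by omega) (by omega))
      (by rw [hT1]; linarith [mono (show 1 < 2 by omega) (show 2 < k by omega)])
      (by rw [hT2]; linarith [mono (show 2 < k - 1 by omega) (show k - 1 < k by omega)])
    obtain ⟨i, hi, hai⟩ := mem_image.1 hx
    rw [mem_Icc] at hi
    rw [hT1] at hai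
    have : i < 2 := (ha.lt_iff_lt (show i < k by omega) (show 2 < k by omega)).1 (by linarith)
    obtain rfl : i = 1 := by omega
    linarith
  refine eq_mul_of_apply_succ ha0 fun i hi => ?_
  match i with
  | 0 => rw [ha0, add_zero]
  | 1 => exact htwo
  | i + 2 => exact hstep (i + 2) (by omega) (by omega)

end Rigidity

theorem restricted_sumset_card_inverse_interval_zero_mem (k r : ℕ) (hk7 : 7 ≤ k)
    (hr2 : 2 ≤ r) (hrk : r ≤ k - 2)
    (A : Finset ℤ) (hAnonneg : ∀ a ∈ A, 0 ≤ a) (h0A : (0 : ℤ) ∈ A) (hk : A.card = k)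
    (heq : (rSumH (Finset.Icc 0 r) A).card = r * k - r * (r + 1) / 2 + 1) :
    ∃ d : ℤ, 0 < d ∧ A = (Finset.range k).image (fun i : ℕ => (i : ℤ) * d) := by
  obtain ⟨a, ha, rfl⟩ := A.exists_strictMonoOn_image_range hk
  have ha0 : a 0 = 0 := by
    obtain ⟨l, hl, hal⟩ := mem_image.1 h0A
    have hle := ha.monotoneOn (show 0 < k by omega) (mem_range.1 hl) (Nat.zero_le l)
    linarith [hAnonneg (a 0) (mem_image_of_mem a (mem_range.2 (show 0 < k by omega)))]
  have hchain : rSumH (Icc 0 r) ((range k).image a) = sumChain a k r := by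
    refine (eq_of_subset_of_card_le (sumChain_subset_rSumH ha.injOn r) ?_).symm
    rw [heq, card_sumChain ha ha0 (by omega), sum_range_tsub_one_tsub k r (by omega)]
  have hmul := eq_mul_of_add_mem_sumChain ha ha0 (by omega) fun i j hij hj => by
    have hpair := sum_mem_rSumH_image_range (H := Icc 0 r) (B := {i, j}) ha.injOn
      (by intro x; simp only [mem_insert, mem_singleton, mem_range]; omega)
      (by rw [card_pair hij.ne, mem_Icc]; omega)
    rwa [sum_pair hij.ne, hchain] at hpair
  exact ⟨a 1, pos_of_strictMonoOn ha ha0 one_pos (by omega),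
    image_congr fun i hi => hmul i (mem_range.1 hi)⟩
end

section
/- Let A be a set of k positive integers with elements a_1 < a_2 < ⋯ < a_k, let H = {h_1, …, h_r} be a set of positive integers with h_1 < ⋯ < h_r, and define S_1 = h_1 A and, for i = 2, …, r, S_i = (h_i − h_{i−1})A + h_{i−1}a_k (an elementwise translate). Then S_1, …, S_r are pairwise disjoint subsets of HA, and max(S_i) < min(S_{i+1}) for i = 1, …, r−1. -/
open Finset Pointwise

lemma itSum_nonneg (A : Finset ℤ) (hApos : ∀ a ∈ A, 0 < a) :
    ∀ n, ∀ x ∈ itSum n A, 0 ≤ x := by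
  intro n
  induction n with
  | zero => intro x hx; simp [itSum] at hx; simp [hx]
  | succ m ih =>
    intro x hx
    simp only [itSum, Finset.mem_add] at hx
    obtain ⟨a, ha, y, hy, rfl⟩ := hx
    have h1 := hApos a ha
    have h2 := ih y hy
    omega

lemma itSum_pos (A : Finset ℤ) (hApos : ∀ a ∈ A, 0 < a) (n : ℕ) (hn : 1 ≤ n) :
    ∀ x ∈ itSum n A, 0 < x := by
  obtain ⟨m, rfl⟩ : ∃ m, n = m + 1 := ⟨n - 1, by omega⟩
  intro x hx
  simp only [itSum, Finset.mem_add] at hx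
  obtain ⟨a, ha, y, hy, rfl⟩ := hx
  have h1 := hApos a ha
  have h2 := itSum_nonneg A hApos m y hy
  omega

lemma itSum_le_max (A : Finset ℤ) (hAne : A.Nonempty) :
    ∀ n, ∀ x ∈ itSum n A, x ≤ (n : ℤ) * A.max' hAne := by
  intro n
  induction n with
  | zero => intro x hx; simp [itSum] at hx; simp [hx]
  | succ m ih =>
    intro x hx
    simp only [itSum, Finset.mem_add] at hx
    obtain ⟨a, ha, y, hy, rfl⟩ := hx
    have h1 := A.le_max' a ha
    have h2 := ih y hy
    push_cast
    nlinarith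

lemma mul_max_mem_itSum (A : Finset ℤ) (hAne : A.Nonempty) :
    ∀ n, (n : ℤ) * A.max' hAne ∈ itSum n A := by
  intro n
  induction n with
  | zero => simp [itSum]
  | succ m ih =>
    simp only [itSum, Finset.mem_add]
    refine ⟨A.max' hAne, A.max'_mem hAne, (m : ℤ) * A.max' hAne, ih, by push_cast; ring⟩

lemma itSum_add_mem (A : Finset ℤ) :
    ∀ m n (x y : ℤ), x ∈ itSum m A → y ∈ itSum n A → x + y ∈ itSum (m + n) A := by
  intro m
  induction m with
  | zero =>
    intro n x y hx hy
    simp [itSum] at hx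
    simpa [hx] using hy
  | succ p ih =>
    intro n x y hx hy
    simp only [itSum, Finset.mem_add] at hx ⊢
    obtain ⟨a, ha, z, hz, rfl⟩ := hx
    have : p + 1 + n = (p + n) + 1 := by omega
    rw [this]
    simp only [itSum, Finset.mem_add]
    exact ⟨a, ha, z + y, ih n z y hz hy, by ring⟩

theorem sumset_decomposition (k r : ℕ) (A : Finset ℤ) (hAne : A.Nonempty)
    (hApos : ∀ a ∈ A, 0 < a) (hk : A.card = k)
    (h : ℕ → ℕ) (hpos : ∀ i ∈ Finset.Icc 1 r, 0 < h i)
    (hmono : ∀ i, 1 ≤ i → i < r → h i < h (i + 1))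
    (H : Finset ℕ) (hH : H = (Finset.Icc 1 r).image h)
    (S : ℕ → Finset ℤ)
    (hS1 : S 1 = itSum (h 1) A)
    (hSi : ∀ i, 2 ≤ i → i ≤ r → S i = (itSum (h i - h (i - 1)) A).image
      (fun x => x + (h (i - 1) : ℤ) * A.max' hAne)) :
    (∀ i ∈ Finset.Icc 1 r, S i ⊆ sumsetH H A) ∧
    (∀ i ∈ Finset.Icc 1 r, ∀ j ∈ Finset.Icc 1 r, i ≠ j → Disjoint (S i) (S j)) ∧
    (∀ i, 1 ≤ i → i < r → ∀ x ∈ S i, ∀ y ∈ S (i + 1), x < y) := by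
  set M := A.max' hAne with hM
  have hMpos : 0 < M := hApos _ (A.max'_mem hAne)
  -- monotonicity of h on [1, r]
  have hmono' : ∀ i j, 1 ≤ i → i ≤ j → j ≤ r → h i ≤ h j := by
    intro i j hi hij hjr
    induction j with
    | zero => omega
    | succ m ih =>
      rcases Nat.eq_or_lt_of_le hij with heq | hlt
      · rw [heq]
      · have h1 : h i ≤ h m := ih (by omega) (by omega)
        have h2 : h m < h (m + 1) := hmono m (by omega) (by omega)
        omega
  -- upper bound
  have hub : ∀ i, 1 ≤ i → i ≤ r → ∀ x ∈ S i, x ≤ (h i : ℤ) * M := by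
    intro i hi hir x hx
    rcases Nat.eq_or_lt_of_le hi with heq | hlt
    · subst heq
      rw [hS1] at hx
      exact itSum_le_max A hAne (h 1) x hx
    · rw [hSi i hlt hir] at hx
      simp only [Finset.mem_image] at hx
      obtain ⟨z, hz, rfl⟩ := hx
      have hle : h (i - 1) ≤ h i := hmono' (i - 1) i (by omega) (by omega) hir
      have h1 := itSum_le_max A hAne (h i - h (i - 1)) z hz
      have h2 : ((h i - h (i - 1) : ℕ) : ℤ) = (h i : ℤ) - (h (i - 1) : ℤ) := by
        omega
      rw [h2] at h1
      linarith
  -- lower bound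
  have hlb : ∀ j, 2 ≤ j → j ≤ r → ∀ y ∈ S j, (h (j - 1) : ℤ) * M < y := by
    intro j hj hjr y hy
    rw [hSi j hj hjr] at hy
    simp only [Finset.mem_image] at hy
    obtain ⟨z, hz, rfl⟩ := hy
    have hlt : h (j - 1) < h j := by
      have e1 := hmono (j - 1) (by omega) (by omega)
      have e2 : j - 1 + 1 = j := by omega
      rwa [e2] at e1
    have hz' : 0 < z := itSum_pos A hApos (h j - h (j - 1)) (by omega) z hz
    linarith
  refine ⟨?_, ?_, ?_⟩
  · -- subset
    intro i hi x hx
    simp only [Finset.mem_Icc] at hi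
    have hhiH : h i ∈ H := by
      rw [hH]; exact Finset.mem_image_of_mem h (Finset.mem_Icc.mpr hi)
    have hxit : x ∈ itSum (h i) A := by
      rcases Nat.eq_or_lt_of_le hi.1 with heq | hlt
      · have := hi.1
        subst heq
        rwa [hS1] at hx
      · rw [hSi i hlt hi.2] at hx
        simp only [Finset.mem_image] at hx
        obtain ⟨z, hz, rfl⟩ := hx
        have hle : h (i - 1) ≤ h i := hmono' (i - 1) i (by omega) (by omega) hi.2
        have := itSum_add_mem A (h i - h (i - 1)) (h (i - 1)) z
          ((h (i - 1) : ℤ) * M) hz (mul_max_mem_itSum A hAne (h (i - 1)))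
        rwa [Nat.sub_add_cancel hle] at this
    exact Finset.mem_biUnion.mpr ⟨h i, hhiH, hxit⟩
  · -- disjointness
    have key : ∀ i j, 1 ≤ i → i < j → j ≤ r → Disjoint (S i) (S j) := by
      intro i j hi hij hjr
      rw [Finset.disjoint_left]
      intro x hxi hxj
      have h1 : x ≤ (h i : ℤ) * M := hub i hi (by omega) x hxi
      have h2 : (h (j - 1) : ℤ) * M < x := hlb j (by omega) hjr x hxj
      have h3 : h i ≤ h (j - 1) := hmono' i (j - 1) hi (by omega) (by omega)
      have h4 : (h i : ℤ) * M ≤ (h (j - 1) : ℤ) * M := by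
        have : (h i : ℤ) ≤ (h (j - 1) : ℤ) := by exact_mod_cast h3
        nlinarith
      linarith
    intro i hi j hj hne
    simp only [Finset.mem_Icc] at hi hj
    rcases lt_or_gt_of_ne hne with hlt | hgt
    · exact key i j hi.1 hlt hj.2
    · exact (key j i hj.1 hgt hi.2).symm
  · -- ordering
    intro i hi hir x hx y hy
    have h1 : x ≤ (h i : ℤ) * M := hub i hi (by omega) x hx
    have h2 : (h (i + 1 - 1) : ℤ) * M < y := hlb (i + 1) (by omega) (by omega) y hy
    simp only [Nat.add_sub_cancel] at h2
    linarith
end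

section
/- Let A be a set of k positive integers with elements a_1 < a_2 < ⋯ < a_k, let H = {h_1, …, h_r} be a set of positive integers with h_1 < ⋯ < h_r ≤ k, and set h_0 = 0. Define S_1 = h_1^A and, for i = 2, …, r, S_i = (h_i − h_{i−1})^A_i + max(h_{i−1}^A), where A_i = {a_1, …, a_{k−h_{i−1}}}. Then S_1, …, S_r are pairwise disjoint subsets of H^A, and max(S_i) < min(S_{i+1}) for i = 1, …, r−1. -/
open Finset Pointwise

section aux
variable {k : ℕ} {a : ℕ → ℤ}

lemma a_injOn (hamono : ∀ i j, 1 ≤ i → i < j → j ≤ k → a i < a j) :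
    Set.InjOn a (Finset.Icc 1 k : Finset ℕ) := by
  intro i hi j hj hij
  simp only [coe_Icc, Set.mem_Icc] at hi hj
  by_contra hne
  rcases Nat.lt_or_ge i j with hlt | hge
  · exact absurd hij (ne_of_lt (hamono i j hi.1 hlt hj.2))
  · have hlt : j < i := lt_of_le_of_ne hge (Ne.symm hne)
    exact absurd hij.symm (ne_of_lt (hamono j i hj.1 hlt hi.2))

lemma card_image_Icc (hamono : ∀ i j, 1 ≤ i → i < j → j ≤ k → a i < a j)
    {p q : ℕ} (hp : 1 ≤ p) (hq : q ≤ k) :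
    ((Finset.Icc p q).image a).card = q + 1 - p := by
  rw [Finset.card_image_of_injOn, Nat.card_Icc]
  exact (a_injOn hamono).mono (by
    intro x hx
    simp only [coe_Icc, Set.mem_Icc] at hx ⊢
    omega)

lemma sep (hamono : ∀ i j, 1 ≤ i → i < j → j ≤ k → a i < a j) {n : ℕ} (hn : n ≤ k)
    {x y : ℤ} (hx : x ∈ (Finset.Icc 1 k).image a)
    (hxT : x ∉ (Finset.Icc (k - n + 1) k).image a)
    (hy : y ∈ (Finset.Icc (k - n + 1) k).image a) : x < y := by
  obtain ⟨p, hp, rfl⟩ := Finset.mem_image.1 hx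
  obtain ⟨q, hq, rfl⟩ := Finset.mem_image.1 hy
  simp only [Finset.mem_Icc] at hp hq
  have hpn : p ≤ k - n := by
    by_contra hc
    exact hxT (Finset.mem_image.2 ⟨p, Finset.mem_Icc.2 (by omega), rfl⟩)
  exact hamono p q hp.1 (by omega) hq.2

lemma sum_le_top (hamono : ∀ i j, 1 ≤ i → i < j → j ≤ k → a i < a j) {n : ℕ} (hn : n ≤ k)
    {B : Finset ℤ} (hB : B ⊆ (Finset.Icc 1 k).image a) (hcard : B.card = n) :
    B.sum id ≤ ((Finset.Icc (k - n + 1) k).image a).sum id := by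
  set T := (Finset.Icc (k - n + 1) k).image a with hT
  have hcardT : T.card = n := by
    rw [hT, card_image_Icc hamono (by omega) le_rfl]; omega
  have hcc : B.card = T.card := by rw [hcard, hcardT]
  rcases (B \ T).eq_empty_or_nonempty with he | hne
  · have hBT : B ⊆ T := Finset.sdiff_eq_empty_iff_subset.1 he
    rw [Finset.eq_of_subset_of_card_le hBT (le_of_eq hcc.symm)]
  · have hTBcard : (T \ B).card = (B \ T).card := (Finset.card_sdiff_comm hcc).symm
    have hTBne : (T \ B).Nonempty := by
      rw [← Finset.card_pos, hTBcard, Finset.card_pos]; exact hne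
    set c := (T \ B).min' hTBne with hc
    have h1 : ∀ x ∈ B \ T, x ≤ c := by
      intro x hx
      have hxB := (Finset.mem_sdiff.1 hx).1
      have hxT := (Finset.mem_sdiff.1 hx).2
      have hcT : c ∈ T := (Finset.mem_sdiff.1 ((T \ B).min'_mem hTBne)).1
      exact le_of_lt (sep hamono hn (hB hxB) hxT hcT)
    have h2 : ∀ y ∈ T \ B, c ≤ y := fun y hy => Finset.min'_le _ y hy
    have key : (B \ T).sum id ≤ (T \ B).sum id := by
      calc (B \ T).sum id ≤ (B \ T).card • c := Finset.sum_le_card_nsmul _ id c h1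
        _ = (T \ B).card • c := by rw [hTBcard]
        _ ≤ (T \ B).sum id := Finset.card_nsmul_le_sum _ id c h2
    have e1 := Finset.sum_inter_add_sum_sdiff B T id
    have e2 := Finset.sum_inter_add_sum_sdiff T B id
    rw [Finset.inter_comm] at e2
    have hB' : B.sum id = ∑ x ∈ B, id x := rfl
    have hT' : T.sum id = ∑ x ∈ T, id x := rfl
    have hk' : (B \ T).sum id = ∑ x ∈ B \ T, id x := rfl
    have hk2 : (T \ B).sum id = ∑ x ∈ T \ B, id x := rfl
    rw [hk', hk2] at key
    rw [hB', hT']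
    linarith

lemma top_mem_rSum (hamono : ∀ i j, 1 ≤ i → i < j → j ≤ k → a i < a j) {n : ℕ} (hn : n ≤ k) :
    ((Finset.Icc (k - n + 1) k).image a).sum id ∈ rSum n ((Finset.Icc 1 k).image a) := by
  apply Finset.mem_image.2
  refine ⟨(Finset.Icc (k - n + 1) k).image a, ?_, rfl⟩
  rw [Finset.mem_powersetCard]
  constructor
  · exact Finset.image_subset_image (by intro x hx; simp only [Finset.mem_Icc] at hx ⊢; omega)
  · rw [card_image_Icc hamono (by omega) le_rfl]; omega

end aux

theorem restricted_sumset_decomposition (k r : ℕ) (A : Finset ℤ) (a : ℕ → ℤ)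
    (hapos : ∀ i ∈ Finset.Icc 1 k, 0 < a i)
    (hamono : ∀ i j, 1 ≤ i → i < j → j ≤ k → a i < a j)
    (hA : A = (Finset.Icc 1 k).image a) (hk : A.card = k)
    (h : ℕ → ℕ) (h0 : h 0 = 0)
    (hmono : ∀ i, i < r → h i < h (i + 1)) (hle : h r ≤ k)
    (H : Finset ℕ) (hH : H = (Finset.Icc 1 r).image h)
    (m : ℕ → ℤ) (hm : ∀ i, i ≤ r → (rSum (h i) A).max = (m i : WithBot ℤ))
    (S : ℕ → Finset ℤ)
    (hS1 : S 1 = rSum (h 1) A)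
    (hSi : ∀ i, 2 ≤ i → i ≤ r →
      S i = (rSum (h i - h (i - 1)) ((Finset.Icc 1 (k - h (i - 1))).image a)).image
        (fun x => x + m (i - 1))) :
    (∀ i ∈ Finset.Icc 1 r, S i ⊆ rSumH H A) ∧
    (∀ i ∈ Finset.Icc 1 r, ∀ j ∈ Finset.Icc 1 r, i ≠ j → Disjoint (S i) (S j)) ∧
    (∀ i, 1 ≤ i → i < r → ∀ x ∈ S i, ∀ y ∈ S (i + 1), x < y) := by

  have hmono' : ∀ i j, i ≤ j → j ≤ r → h i ≤ h j := by
    intro i j hij hjr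
    induction j with
    | zero => rw [Nat.le_zero.mp hij]
    | succ j ih =>
      rcases Nat.eq_or_lt_of_le hij with he | hlt
      · rw [he]
      · exact le_trans (ih (by omega) (by omega)) (le_of_lt (hmono j (by omega)))
  have hhk : ∀ i, i ≤ r → h i ≤ k := fun i hi => le_trans (hmono' i r hi le_rfl) hle
  have hmval : ∀ i, i ≤ r → m i = ((Finset.Icc (k - h i + 1) k).image a).sum id := by
    intro i hi
    have hmem : m i ∈ rSum (h i) A := Finset.mem_of_max (hm i hi)
    have h2 : m i ≤ ((Finset.Icc (k - h i + 1) k).image a).sum id := by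
      obtain ⟨B, hB, hsum⟩ := Finset.mem_image.1 hmem
      rw [Finset.mem_powersetCard] at hB
      rw [← hsum]
      refine sum_le_top hamono (hhk i hi) ?_ hB.2
      rw [← hA]; exact hB.1
    have h3 : ((Finset.Icc (k - h i + 1) k).image a).sum id ≤ m i := by
      have hmem2 : ((Finset.Icc (k - h i + 1) k).image a).sum id ∈ rSum (h i) A := by
        rw [hA]; exact top_mem_rSum hamono (hhk i hi)
      have := Finset.le_max hmem2
      rw [hm i hi] at this
      exact_mod_cast this
    linarith
  have hC : ∀ i, 1 ≤ i → i ≤ r → S i ⊆ rSum (h i) A := by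
    intro i h1i hir
    rcases Nat.eq_or_lt_of_le h1i with h1 | h2i
    · rw [← h1, hS1]
    · rw [hSi i h2i hir]
      intro x hx
      obtain ⟨s, hs, rfl⟩ := Finset.mem_image.1 hx
      obtain ⟨B, hBm, rfl⟩ := Finset.mem_image.1 hs
      rw [Finset.mem_powersetCard] at hBm
      have hprevk : h (i - 1) ≤ k := hhk (i - 1) (by omega)
      have hprevlt : h (i - 1) < h i := by
        have := hmono (i - 1) (by omega)
        have heq : i - 1 + 1 = i := by omega
        rwa [heq] at this
      set T := (Finset.Icc (k - h (i - 1) + 1) k).image a with hT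
      have hmprev := hmval (i - 1) (by omega)
      have hdisj : Disjoint B T := by
        rw [Finset.disjoint_left]
        intro x hxB hxT
        obtain ⟨p, hp, rfl⟩ := Finset.mem_image.1 (hBm.1 hxB)
        obtain ⟨q, hq, hpq⟩ := Finset.mem_image.1 hxT
        rw [Finset.mem_Icc] at hp hq
        exact absurd hpq.symm (ne_of_lt (hamono p q (by omega) (by omega) (by omega)))
      have hBA : B ⊆ A := by
        rw [hA]
        exact hBm.1.trans (Finset.image_subset_image (Finset.Icc_subset_Icc le_rfl (by omega)))
      have hTA : T ⊆ A := by
        rw [hA, hT]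
        exact Finset.image_subset_image (Finset.Icc_subset_Icc (by omega) le_rfl)
      have hcardT : T.card = h (i - 1) := by
        rw [hT, card_image_Icc hamono (by omega) le_rfl]; omega
      apply Finset.mem_image.2
      refine ⟨B ∪ T, ?_, ?_⟩
      · rw [Finset.mem_powersetCard]
        refine ⟨Finset.union_subset hBA hTA, ?_⟩
        rw [Finset.card_union_of_disjoint hdisj, hBm.2, hcardT]
        omega
      · show (B ∪ T).sum id = B.sum id + m (i - 1)
        rw [Finset.sum_union hdisj, hmprev]
  have hL : ∀ i, 2 ≤ i → i ≤ r → ∀ y ∈ S i, m (i - 1) < y := by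
    intro i h2i hir y hy
    rw [hSi i h2i hir] at hy
    obtain ⟨s, hs, rfl⟩ := Finset.mem_image.1 hy
    obtain ⟨B, hBm, rfl⟩ := Finset.mem_image.1 hs
    rw [Finset.mem_powersetCard] at hBm
    have hprevlt : h (i - 1) < h i := by
      have := hmono (i - 1) (by omega)
      have heq : i - 1 + 1 = i := by omega
      rwa [heq] at this
    have hpos : 0 < B.sum id := by
      refine Finset.sum_pos ?_ ?_
      · intro x hxB
        obtain ⟨p, hp, rfl⟩ := Finset.mem_image.1 (hBm.1 hxB)
        rw [Finset.mem_Icc] at hp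
        exact hapos p (Finset.mem_Icc.2 ⟨hp.1, by omega⟩)
      · rw [← Finset.card_pos, hBm.2]; omega
    show m (i - 1) < B.sum id + m (i - 1)
    linarith
  have hU : ∀ i, 1 ≤ i → i ≤ r → ∀ x ∈ S i, x ≤ m i := by
    intro i h1 hir x hx
    have := Finset.le_max (hC i h1 hir hx)
    rw [hm i hir] at this
    exact_mod_cast this
  have hN : ∀ i, 1 ≤ i → i ≤ r → (S i).Nonempty := by
    intro i h1 hir
    rcases Nat.eq_or_lt_of_le h1 with he | h2
    · rw [← he, hS1]
      exact ⟨m 1, Finset.mem_of_max (hm 1 (by omega))⟩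
    · rw [hSi i h2 hir]
      apply Finset.Nonempty.image
      apply Finset.Nonempty.image
      rw [Finset.powersetCard_nonempty, card_image_Icc hamono le_rfl (by omega)]
      have := hhk i hir
      omega
  have hMlt : ∀ i, 1 ≤ i → i < r → m i < m (i + 1) := by
    intro i h1 hir
    obtain ⟨y, hy⟩ := hN (i + 1) (by omega) (by omega)
    have hlow := hL (i + 1) (by omega) (by omega) y hy
    have heq : i + 1 - 1 = i := by omega
    rw [heq] at hlow
    exact lt_of_lt_of_le hlow (hU (i + 1) (by omega) (by omega) y hy)
  have hMle : ∀ j, j ≤ r → ∀ i, 1 ≤ i → i ≤ j → m i ≤ m j := by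
    intro j
    induction j with
    | zero => intro _ i h1 hij; omega
    | succ j ih =>
      intro hjr i h1 hij
      rcases Nat.eq_or_lt_of_le hij with he | hlt
      · rw [he]
      · exact le_trans (ih (by omega) i h1 (by omega)) (le_of_lt (hMlt j (by omega) (by omega)))
  refine ⟨?_, ?_, ?_⟩
  · intro i hi x hx
    rw [Finset.mem_Icc] at hi
    have hhiH : h i ∈ H := by
      rw [hH]; exact Finset.mem_image.2 ⟨i, Finset.mem_Icc.2 hi, rfl⟩
    exact Finset.mem_biUnion.2 ⟨h i, hhiH, hC i hi.1 hi.2 hx⟩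
  · have key : ∀ i j, 1 ≤ i → i < j → j ≤ r → Disjoint (S i) (S j) := by
      intro i j h1 hij hjr
      rw [Finset.disjoint_left]
      intro x hxi hxj
      have hxle : x ≤ m i := hU i h1 (by omega) x hxi
      have hxgt : m (j - 1) < x := hL j (by omega) hjr x hxj
      have hmm : m i ≤ m (j - 1) := hMle (j - 1) (by omega) i h1 (by omega)
      linarith
    intro i hi j hj hne
    rw [Finset.mem_Icc] at hi hj
    rcases lt_or_gt_of_ne hne with hlt | hgt
    · exact key i j hi.1 hlt hj.2
    · exact (key j i hj.1 hgt hi.2).symm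
  · intro i h1 hir x hx y hy
    have hx' : x ≤ m i := hU i h1 (by omega) x hx
    have hy' := hL (i + 1) (by omega) (by omega) y hy
    have heq : i + 1 - 1 = i := by omega
    rw [heq] at hy'
    linarith
end
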